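/- arXiv:quant-ph/0601009 — 6 statements merged into one kernel-verified Lean document; each statement's English description precedes it below -/
import Mathlib

section
/- For every positive operator measure E : 𝒜 → L(H) and every measurable function f : Ω → ℂ, the set D(f,E) is a linear subspace of H (not necessarily dense), and there exists a unique linear operator L(f,E) with domain D(f,E) such that ⟨ψ, L(f,E)φ⟩ = ∫ f dE_{ψ,φ} for all ψ ∈ H and all φ ∈ D(f,E). -/
open MeasureTheory Filter Topology ComplexConjugate

noncomputable section

local notation "⟪" x ", " y "⟫" => @inner ℂ _ _ x y

/-- The total variation measure of a complex measure. -/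
def MeasureTheory.ComplexMeasure.tv {Ω : Type*} [MeasurableSpace Ω]
    (ν : MeasureTheory.ComplexMeasure Ω) : MeasureTheory.Measure Ω :=
  (MeasureTheory.ComplexMeasure.re ν).totalVariation +
    (MeasureTheory.ComplexMeasure.im ν).totalVariation

/-- `f` is integrable with respect to the complex measure `ν`: it is integrable with respect
to the total variation measure of `ν`. -/
def MeasureTheory.ComplexMeasure.CIntegrable {Ω : Type*} [MeasurableSpace Ω]
    (ν : MeasureTheory.ComplexMeasure Ω) (f : Ω → ℂ) : Prop :=
  MeasureTheory.Integrable f ν.tv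

/-- The integral of a complex function against a signed measure. -/
def MeasureTheory.SignedMeasure.cintegral {Ω : Type*} [MeasurableSpace Ω]
    (σ : MeasureTheory.SignedMeasure Ω) (f : Ω → ℂ) : ℂ :=
  (∫ x, f x ∂σ.toJordanDecomposition.posPart) - ∫ x, f x ∂σ.toJordanDecomposition.negPart

/-- The integral of a complex function against a complex measure. -/
def MeasureTheory.ComplexMeasure.cintegral {Ω : Type*} [MeasurableSpace Ω]
    (ν : MeasureTheory.ComplexMeasure Ω) (f : Ω → ℂ) : ℂ :=
  (MeasureTheory.ComplexMeasure.re ν).cintegral f +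
    Complex.I * (MeasureTheory.ComplexMeasure.im ν).cintegral f

/-!
For `φ ∈ D(f,E)` the map `ψ ↦ ∫ f dE_{ψ,φ}` is conjugate-linear on `H`; once it is known to be
bounded, the Riesz representation theorem produces the vector `L(f,E)φ`, and linearity and
uniqueness of `L(f,E)` follow because the inner product separates points.

Boundedness comes from the uniform boundedness principle, used twice. Complex measures are
bounded, so the vectors `E(B)φ` are weakly bounded, hence `‖E(B)φ‖ ≤ C_φ` for all `B`; then
`|E_{ψ,φ}|(Ω) ≤ 4 C_φ ‖ψ‖`, and the integrals of the truncations `f_n = f·1{|f| ≤ n}` are bounded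
functionals of `ψ`. By dominated convergence they converge pointwise to `ψ ↦ ∫ f dE_{ψ,φ}`, which
is therefore bounded by Banach–Steinhaus.
-/

open scoped NNReal ENNReal

namespace MeasureTheory.SignedMeasure

variable {Ω : Type*} [MeasurableSpace Ω] {f : Ω → ℂ}

lemma toSignedMeasure_posPart_sub_negPart (s : SignedMeasure Ω) :
    s.toJordanDecomposition.posPart.toSignedMeasure
      - s.toJordanDecomposition.negPart.toSignedMeasure = s :=
  s.toSignedMeasure_toJordanDecomposition

lemma posPart_le_totalVariation (s : SignedMeasure Ω) :
    s.toJordanDecomposition.posPart ≤ s.totalVariation :=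
  Measure.le_add_right le_rfl

lemma negPart_le_totalVariation (s : SignedMeasure Ω) :
    s.toJordanDecomposition.negPart ≤ s.totalVariation :=
  Measure.le_add_left le_rfl

lemma integrable_posPart {s : SignedMeasure Ω} (h : Integrable f s.totalVariation) :
    Integrable f s.toJordanDecomposition.posPart :=
  h.mono_measure s.posPart_le_totalVariation

lemma integrable_negPart {s : SignedMeasure Ω} (h : Integrable f s.totalVariation) :
    Integrable f s.toJordanDecomposition.negPart :=
  h.mono_measure s.negPart_le_totalVariation

lemma totalVariation_le_of_eq_sub {s : SignedMeasure Ω} {μ ν : Measure Ω} [IsFiniteMeasure μ]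
    [IsFiniteMeasure ν] (hs : s = μ.toSignedMeasure - ν.toSignedMeasure) :
    s.totalVariation ≤ μ + ν := by
  rw [totalVariation_eq_variation, hs]
  grw [VectorMeasure.variation_sub_le, Measure.variation_toSignedMeasure,
    Measure.variation_toSignedMeasure]

lemma cintegral_eq_integral_sub {s : SignedMeasure Ω} {μ ν : Measure Ω} [IsFiniteMeasure μ]
    [IsFiniteMeasure ν] (hs : s = μ.toSignedMeasure - ν.toSignedMeasure)
    (hμ : Integrable f μ) (hν : Integrable f ν) :
    s.cintegral f = (∫ x, f x ∂μ) - ∫ x, f x ∂ν := by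
  have hs_int : Integrable f s.totalVariation :=
    (hμ.add_measure hν).mono_measure (totalVariation_le_of_eq_sub hs)
  have hsum : s.toJordanDecomposition.posPart + ν = μ + s.toJordanDecomposition.negPart := by
    rw [← Measure.toSignedMeasure_eq_toSignedMeasure_iff, Measure.toSignedMeasure_add,
      Measure.toSignedMeasure_add, ← sub_eq_sub_iff_add_eq_add,
      toSignedMeasure_posPart_sub_negPart, hs]
  have key := congrArg (fun m : Measure Ω => ∫ x, f x ∂m) hsum
  simp only [integral_add_measure (integrable_posPart hs_int) hν,
    integral_add_measure hμ (integrable_negPart hs_int)] at key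
  unfold cintegral
  linear_combination key

lemma cintegral_add {s t : SignedMeasure Ω} (hs : Integrable f s.totalVariation)
    (ht : Integrable f t.totalVariation) :
    (s + t).cintegral f = s.cintegral f + t.cintegral f := by
  rw [cintegral_eq_integral_sub
    (μ := s.toJordanDecomposition.posPart + t.toJordanDecomposition.posPart)
    (ν := s.toJordanDecomposition.negPart + t.toJordanDecomposition.negPart) ?_
    ((integrable_posPart hs).add_measure (integrable_posPart ht))
    ((integrable_negPart hs).add_measure (integrable_negPart ht)),
    integral_add_measure (integrable_posPart hs) (integrable_posPart ht),
    integral_add_measure (integrable_negPart hs) (integrable_negPart ht)]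
  · unfold cintegral; ring
  · conv_lhs =>
      rw [← toSignedMeasure_posPart_sub_negPart s, ← toSignedMeasure_posPart_sub_negPart t]
    rw [Measure.toSignedMeasure_add, Measure.toSignedMeasure_add]
    abel

lemma integrable_totalVariation_smul {s : SignedMeasure Ω} (h : Integrable f s.totalVariation)
    (r : ℝ) : Integrable f (r • s).totalVariation := by
  rw [totalVariation_eq_variation, VectorMeasure.variation_smul,
    ← totalVariation_eq_variation]
  exact h.smul_measure ENNReal.coe_ne_top

lemma cintegral_neg (s : SignedMeasure Ω) : (-s).cintegral f = -s.cintegral f := by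
  simp only [cintegral, toJordanDecomposition_neg, JordanDecomposition.neg_posPart,
    JordanDecomposition.neg_negPart, neg_sub]

lemma cintegral_smul_of_nonneg {s : SignedMeasure Ω} (hs : Integrable f s.totalVariation) {r : ℝ}
    (hr : 0 ≤ r) : (r • s).cintegral f = r * s.cintegral f := by
  rw [cintegral_eq_integral_sub (μ := r.toNNReal • s.toJordanDecomposition.posPart)
    (ν := r.toNNReal • s.toJordanDecomposition.negPart) ?_
    ((integrable_posPart hs).smul_measure ENNReal.coe_ne_top)
    ((integrable_negPart hs).smul_measure ENNReal.coe_ne_top),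
    integral_smul_nnreal_measure, integral_smul_nnreal_measure, NNReal.smul_def,
    NNReal.smul_def, Real.coe_toNNReal r hr]
  · unfold cintegral; simp only [Complex.real_smul]; ring
  · rw [Measure.toSignedMeasure_smul, Measure.toSignedMeasure_smul, NNReal.smul_def,
      NNReal.smul_def, Real.coe_toNNReal r hr]
    conv_lhs => rw [← toSignedMeasure_posPart_sub_negPart s]
    exact smul_sub _ _ _

lemma cintegral_smul {s : SignedMeasure Ω} (hs : Integrable f s.totalVariation) (r : ℝ) :
    (r • s).cintegral f = r * s.cintegral f := by
  rcases le_total 0 r with hr | hr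
  · exact cintegral_smul_of_nonneg hs hr
  · rw [show r • s = -((-r) • s) by rw [neg_smul r s, neg_neg], cintegral_neg,
      cintegral_smul_of_nonneg hs (neg_nonneg.mpr hr)]
    push_cast
    ring

lemma norm_cintegral_le {s : SignedMeasure Ω} (hs : Integrable f s.totalVariation) :
    ‖s.cintegral f‖ ≤ ∫ x, ‖f x‖ ∂s.totalVariation :=
  calc ‖s.cintegral f‖
      ≤ ‖∫ x, f x ∂s.toJordanDecomposition.posPart‖
        + ‖∫ x, f x ∂s.toJordanDecomposition.negPart‖ := norm_sub_le _ _
    _ ≤ (∫ x, ‖f x‖ ∂s.toJordanDecomposition.posPart)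
        + ∫ x, ‖f x‖ ∂s.toJordanDecomposition.negPart := by
      gcongr <;> exact norm_integral_le_integral_norm _
    _ = ∫ x, ‖f x‖ ∂s.totalVariation :=
      (integral_add_measure (integrable_posPart hs).norm (integrable_negPart hs).norm).symm

lemma tendsto_cintegral_of_dominated_convergence {F : ℕ → Ω → ℂ} (bound : Ω → ℝ)
    {s : SignedMeasure Ω} (hF_meas : ∀ n, AEStronglyMeasurable (F n) s.totalVariation)
    (h_bound : ∀ n x, ‖F n x‖ ≤ bound x) (bound_integrable : Integrable bound s.totalVariation)
    (h_lim : ∀ x, Tendsto (fun n => F n x) atTop (𝓝 (f x))) :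
    Tendsto (fun n => s.cintegral (F n)) atTop (𝓝 (s.cintegral f)) := by
  have hP := s.posPart_le_totalVariation
  have hN := s.negPart_le_totalVariation
  exact (tendsto_integral_of_dominated_convergence bound (fun n => (hF_meas n).mono_measure hP)
    (bound_integrable.mono_measure hP) (fun n => ae_of_all _ (h_bound n)) (ae_of_all _ h_lim)).sub
    (tendsto_integral_of_dominated_convergence bound (fun n => (hF_meas n).mono_measure hN)
    (bound_integrable.mono_measure hN) (fun n => ae_of_all _ (h_bound n)) (ae_of_all _ h_lim))

lemma totalVariation_univ_le {s : SignedMeasure Ω} {M : ℝ≥0∞}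
    (hM : ∀ B, MeasurableSet B → ‖s B‖ₑ ≤ M) : s.totalVariation Set.univ ≤ 2 * M := by
  rw [totalVariation_eq_variation]
  refine le_of_forall_lt fun a ha => ?_
  obtain ⟨t, -, ht, hat⟩ := s.exists_subset_lt_enorm_apply_of_lt_variation MeasurableSet.univ ha
  exact hat.trans_le (by gcongr; exact hM t ht)

end MeasureTheory.SignedMeasure

namespace MeasureTheory.ComplexMeasure

variable {Ω : Type*} [MeasurableSpace Ω] {f : Ω → ℂ}

instance (ν : ComplexMeasure Ω) : IsFiniteMeasure ν.tv := by
  unfold tv; infer_instance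

lemma totalVariation_re_le_tv (ν : ComplexMeasure Ω) : (re ν).totalVariation ≤ ν.tv :=
  Measure.le_add_right le_rfl

lemma totalVariation_im_le_tv (ν : ComplexMeasure Ω) : (im ν).totalVariation ≤ ν.tv :=
  Measure.le_add_left le_rfl

lemma integrable_re {ν : ComplexMeasure Ω} (h : ν.CIntegrable f) :
    Integrable f (re ν).totalVariation :=
  Integrable.mono_measure h ν.totalVariation_re_le_tv

lemma integrable_im {ν : ComplexMeasure Ω} (h : ν.CIntegrable f) :
    Integrable f (im ν).totalVariation :=
  Integrable.mono_measure h ν.totalVariation_im_le_tv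

lemma variation_le_tv (ν : ComplexMeasure Ω) : ν.variation ≤ ν.tv := by
  refine VectorMeasure.variation_le_of_forall_enorm_le fun B _ => ?_
  calc ‖ν B‖ₑ ≤ ‖re ν B‖ₑ + ‖im ν B‖ₑ := by
        simp only [re_apply, im_apply, ← ofReal_norm]
        rw [← ENNReal.ofReal_add (norm_nonneg _) (norm_nonneg _)]
        exact ENNReal.ofReal_le_ofReal (Complex.norm_le_abs_re_add_abs_im _)
    _ ≤ (re ν).totalVariation B + (im ν).totalVariation B := by
        gcongr <;> exact SignedMeasure.enorm_le_totalVariation _ _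

lemma enorm_re_apply_le (ν : ComplexMeasure Ω) (B : Set Ω) : ‖re ν B‖ₑ ≤ ‖ν B‖ₑ := by
  rw [re_apply]
  exact enorm_le_iff_norm_le.mpr (Complex.abs_re_le_norm _)

lemma enorm_im_apply_le (ν : ComplexMeasure Ω) (B : Set Ω) : ‖im ν B‖ₑ ≤ ‖ν B‖ₑ := by
  rw [im_apply]
  exact enorm_le_iff_norm_le.mpr (Complex.abs_im_le_norm _)

lemma totalVariation_re_le_variation (ν : ComplexMeasure Ω) :
    (re ν).totalVariation ≤ ν.variation := by
  rw [SignedMeasure.totalVariation_eq_variation]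
  exact VectorMeasure.variation_le_of_forall_enorm_le fun B _ =>
    (enorm_re_apply_le ν B).trans (VectorMeasure.enorm_measure_le_variation ν B)

lemma totalVariation_im_le_variation (ν : ComplexMeasure Ω) :
    (im ν).totalVariation ≤ ν.variation := by
  rw [SignedMeasure.totalVariation_eq_variation]
  exact VectorMeasure.variation_le_of_forall_enorm_le fun B _ =>
    (enorm_im_apply_le ν B).trans (VectorMeasure.enorm_measure_le_variation ν B)

lemma tv_le_two_smul_variation (ν : ComplexMeasure Ω) : ν.tv ≤ (2 : ℝ≥0) • ν.variation := by
  rw [two_smul]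
  exact add_le_add ν.totalVariation_re_le_variation ν.totalVariation_im_le_variation

lemma cintegrable_iff_integrable_variation {ν : ComplexMeasure Ω} :
    ν.CIntegrable f ↔ Integrable f ν.variation :=
  ⟨fun h => h.mono_measure ν.variation_le_tv,
    fun h => (h.smul_measure ENNReal.coe_ne_top).mono_measure ν.tv_le_two_smul_variation⟩

variable (f) in
def cintegrableSubmodule : Submodule ℂ (ComplexMeasure Ω) where
  carrier := {ν | ν.CIntegrable f}
  add_mem' h₁ h₂ := cintegrable_iff_integrable_variation.2 <|
    ((cintegrable_iff_integrable_variation.1 h₁).add_measure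
      (cintegrable_iff_integrable_variation.1 h₂)).mono_measure VectorMeasure.variation_add_le
  zero_mem' := by simp [cintegrable_iff_integrable_variation]
  smul_mem' c ν h := cintegrable_iff_integrable_variation.2 <| by
    rw [VectorMeasure.variation_smul]
    exact (cintegrable_iff_integrable_variation.1 h).smul_measure ENNReal.coe_ne_top

lemma re_smul (c : ℂ) (ν : ComplexMeasure Ω) : re (c • ν) = c.re • re ν + (-c.im) • im ν := by
  ext B hB
  show (c • ν B).re = c.re * (ν B).re + -c.im * (ν B).im
  rw [smul_eq_mul, Complex.mul_re]
  ring

lemma im_smul (c : ℂ) (ν : ComplexMeasure Ω) : im (c • ν) = c.im • re ν + c.re • im ν := by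
  ext B hB
  show (c • ν B).im = c.im * (ν B).re + c.re * (ν B).im
  rw [smul_eq_mul, Complex.mul_im]
  ring

lemma cintegral_add {ν₁ ν₂ : ComplexMeasure Ω} (h₁ : ν₁.CIntegrable f) (h₂ : ν₂.CIntegrable f) :
    (ν₁ + ν₂).cintegral f = ν₁.cintegral f + ν₂.cintegral f := by
  simp only [cintegral, map_add,
    SignedMeasure.cintegral_add (integrable_re h₁) (integrable_re h₂),
    SignedMeasure.cintegral_add (integrable_im h₁) (integrable_im h₂)]
  ring

lemma cintegral_smul (c : ℂ) {ν : ComplexMeasure Ω} (h : ν.CIntegrable f) :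
    (c • ν).cintegral f = c * ν.cintegral f := by
  have hre := integrable_re h
  have him := integrable_im h
  rw [cintegral, cintegral, re_smul, im_smul,
    SignedMeasure.cintegral_add (SignedMeasure.integrable_totalVariation_smul hre _)
      (SignedMeasure.integrable_totalVariation_smul him _),
    SignedMeasure.cintegral_add (SignedMeasure.integrable_totalVariation_smul hre _)
      (SignedMeasure.integrable_totalVariation_smul him _),
    SignedMeasure.cintegral_smul hre, SignedMeasure.cintegral_smul hre,
    SignedMeasure.cintegral_smul him, SignedMeasure.cintegral_smul him]
  conv_rhs => rw [← Complex.re_add_im c]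
  push_cast
  linear_combination (-(c.im * (im ν).cintegral f)) * Complex.I_sq

variable (f) in
def cintegralₗ : cintegrableSubmodule f →ₗ[ℂ] ℂ where
  toFun ν := (ν : ComplexMeasure Ω).cintegral f
  map_add' ν₁ ν₂ := cintegral_add ν₁.2 ν₂.2
  map_smul' c ν := cintegral_smul c ν.2

lemma norm_cintegral_le {ν : ComplexMeasure Ω} (h : ν.CIntegrable f) :
    ‖ν.cintegral f‖ ≤ ∫ x, ‖f x‖ ∂ν.tv :=
  calc ‖ν.cintegral f‖
      ≤ ‖(re ν).cintegral f‖ + ‖Complex.I * (im ν).cintegral f‖ := norm_add_le _ _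
    _ ≤ (∫ x, ‖f x‖ ∂(re ν).totalVariation) + ∫ x, ‖f x‖ ∂(im ν).totalVariation := by
      rw [norm_mul, Complex.norm_I, one_mul]
      exact add_le_add (SignedMeasure.norm_cintegral_le (integrable_re h))
        (SignedMeasure.norm_cintegral_le (integrable_im h))
    _ = ∫ x, ‖f x‖ ∂ν.tv :=
      (integral_add_measure (integrable_re h).norm (integrable_im h).norm).symm

lemma tendsto_cintegral_of_dominated_convergence {F : ℕ → Ω → ℂ} (bound : Ω → ℝ)
    {ν : ComplexMeasure Ω} (hF_meas : ∀ n, AEStronglyMeasurable (F n) ν.tv)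
    (h_bound : ∀ n x, ‖F n x‖ ≤ bound x) (bound_integrable : Integrable bound ν.tv)
    (h_lim : ∀ x, Tendsto (fun n => F n x) atTop (𝓝 (f x))) :
    Tendsto (fun n => ν.cintegral (F n)) atTop (𝓝 (ν.cintegral f)) := by
  have hre := ν.totalVariation_re_le_tv
  have him := ν.totalVariation_im_le_tv
  exact (SignedMeasure.tendsto_cintegral_of_dominated_convergence bound
      (fun n => (hF_meas n).mono_measure hre) h_bound (bound_integrable.mono_measure hre) h_lim).add
    ((SignedMeasure.tendsto_cintegral_of_dominated_convergence bound
      (fun n => (hF_meas n).mono_measure him) h_bound (bound_integrable.mono_measure him)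
      h_lim).const_mul Complex.I)

lemma tv_real_univ_le {ν : ComplexMeasure Ω} {M : ℝ} (hM : ∀ B, MeasurableSet B → ‖ν B‖ ≤ M) :
    ν.tv.real Set.univ ≤ 4 * M := by
  have hM' : ∀ B, MeasurableSet B → ‖ν B‖ₑ ≤ ENNReal.ofReal M := fun B hB => by
    rw [← ofReal_norm]
    exact ENNReal.ofReal_le_ofReal (hM B hB)
  have hre : ∀ B, MeasurableSet B → ‖re ν B‖ₑ ≤ ENNReal.ofReal M := fun B hB =>
    (enorm_re_apply_le ν B).trans (hM' B hB)
  have him : ∀ B, MeasurableSet B → ‖im ν B‖ₑ ≤ ENNReal.ofReal M := fun B hB =>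
    (enorm_im_apply_le ν B).trans (hM' B hB)
  have hM0 : 0 ≤ M := (norm_nonneg _).trans (hM ∅ MeasurableSet.empty)
  refine ENNReal.toReal_le_of_le_ofReal (by positivity) ?_
  calc ν.tv Set.univ ≤ 2 * ENNReal.ofReal M + 2 * ENNReal.ofReal M := add_le_add
        (SignedMeasure.totalVariation_univ_le hre) (SignedMeasure.totalVariation_univ_le him)
    _ = ENNReal.ofReal (4 * M) := by
      rw [← two_mul, ← mul_assoc, ENNReal.ofReal_mul (by norm_num)]
      norm_num

lemma norm_cintegral_le_of_forall_norm_le {ν : ComplexMeasure Ω} (hf : ν.CIntegrable f) {K M : ℝ}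
    (hK₀ : 0 ≤ K) (hK : ∀ x, ‖f x‖ ≤ K) (hM : ∀ B, MeasurableSet B → ‖ν B‖ ≤ M) :
    ‖ν.cintegral f‖ ≤ K * (4 * M) :=
  calc ‖ν.cintegral f‖ ≤ ∫ x, ‖f x‖ ∂ν.tv := norm_cintegral_le hf
    _ ≤ ∫ _, K ∂ν.tv := integral_mono hf.norm (integrable_const K) hK
    _ = K * ν.tv.real Set.univ := by rw [integral_const, smul_eq_mul, mul_comm]
    _ ≤ K * (4 * M) := by gcongr; exact tv_real_univ_le hM

end MeasureTheory.ComplexMeasure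

section InnerProductSpace

variable {𝕜 H : Type*} [RCLike 𝕜] [NormedAddCommGroup H] [InnerProductSpace 𝕜 H]

theorem existsUnique_linearMap_inner_eq {M : Type*} [AddCommGroup M] [Module 𝕜 M]
    (Φ : M →ₗ[𝕜] H → 𝕜) (hΦ : ∀ φ, ∃ w : H, ∀ ψ, inner 𝕜 ψ w = Φ φ ψ) :
    ∃! L : M →ₗ[𝕜] H, ∀ φ ψ, inner 𝕜 ψ (L φ) = Φ φ ψ := by
  choose w hw using hΦ
  refine ⟨{ toFun := w, map_add' := ?_, map_smul' := ?_ }, hw, ?_⟩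
  · intro φ₁ φ₂
    refine ext_inner_left 𝕜 fun ψ => ?_
    rw [hw, inner_add_right, hw, hw, map_add, Pi.add_apply]
  · intro c φ
    refine ext_inner_left 𝕜 fun ψ => ?_
    rw [hw, RingHom.id_apply, inner_smul_right, hw, map_smul, Pi.smul_apply, smul_eq_mul]
  · intro L hL
    ext φ
    exact ext_inner_left 𝕜 fun ψ => (hL φ ψ).trans (hw φ ψ).symm

theorem exists_forall_inner_eq_of_conjLinear [CompleteSpace H] (g : H →L⋆[𝕜] 𝕜) :
    ∃ w : H, ∀ ψ, inner 𝕜 ψ w = g ψ := by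
  refine ⟨(InnerProductSpace.toDual 𝕜 H).symm
    ((starL 𝕜 : 𝕜 ≃L⋆[𝕜] 𝕜).toContinuousLinearMap.comp g), fun ψ => ?_⟩
  rw [← inner_conj_symm, InnerProductSpace.toDual_symm_apply]
  simp

theorem exists_norm_le_of_forall_norm_inner_le [CompleteSpace H] {ι : Type*} (v : ι → H)
    (h : ∀ ψ, ∃ C, ∀ i, ‖inner 𝕜 ψ (v i)‖ ≤ C) : ∃ C, ∀ i, ‖v i‖ ≤ C := by
  obtain ⟨C, hC⟩ := banach_steinhaus (g := fun i => InnerProductSpace.toDual 𝕜 H (v i))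
    fun ψ => by simpa [norm_inner_symm] using h ψ
  exact ⟨C, fun i => by simpa using hC i⟩

end InnerProductSpace

namespace MeasureTheory

def truncation {Ω : Type*} (f : Ω → ℂ) (n : ℕ) : Ω → ℂ := {x | ‖f x‖ ≤ n}.indicator f

section Truncation

variable {Ω : Type*} {f : Ω → ℂ}

lemma norm_truncation_le (n : ℕ) (x : Ω) : ‖truncation f n x‖ ≤ ‖f x‖ :=
  norm_indicator_le_norm_self f x

lemma norm_truncation_le_nat (n : ℕ) (x : Ω) : ‖truncation f n x‖ ≤ n := by
  by_cases h : ‖f x‖ ≤ n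
  · exact (norm_truncation_le n x).trans h
  · simp [truncation, h]

lemma tendsto_truncation (x : Ω) : Tendsto (fun n => truncation f n x) atTop (𝓝 (f x)) := by
  refine tendsto_const_nhds.congr' ?_
  filter_upwards [eventually_ge_atTop ⌈‖f x‖⌉₊] with n hn
  have hx : x ∈ {y | ‖f y‖ ≤ n} := (Nat.le_ceil _).trans (Nat.cast_le.mpr hn)
  exact (Set.indicator_of_mem hx f).symm

variable [MeasurableSpace Ω]

lemma measurable_truncation (hf : Measurable f) (n : ℕ) : Measurable (truncation f n) :=
  hf.indicator (measurableSet_le hf.norm measurable_const)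

lemma ComplexMeasure.cintegrable_truncation (hf : Measurable f) (n : ℕ) (ν : ComplexMeasure Ω) :
    ν.CIntegrable (truncation f n) :=
  Integrable.of_bound (measurable_truncation hf n).aestronglyMeasurable n
    (ae_of_all _ (norm_truncation_le_nat n))

end Truncation

open ComplexMeasure

section Sesquilinear

variable {Ω H : Type*} [MeasurableSpace Ω] [NormedAddCommGroup H] [InnerProductSpace ℂ H]
  (B : H →ₗ⋆[ℂ] H →ₗ[ℂ] ComplexMeasure Ω) (f : Ω → ℂ)

def cintegralDomain : Submodule ℂ H := ⨅ ψ, (cintegrableSubmodule f).comap (B ψ)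

variable {B f} in
lemma mem_cintegralDomain {φ : H} : φ ∈ cintegralDomain B f ↔ ∀ ψ, (B ψ φ).CIntegrable f :=
  Submodule.mem_iInf _

def cintegralForm : cintegralDomain B f →ₗ[ℂ] H → ℂ :=
  LinearMap.pi fun ψ => cintegralₗ f ∘ₗ
    ((B ψ).domRestrict _).codRestrict _ fun φ => mem_cintegralDomain.1 φ.2 ψ

lemma cintegralForm_apply (φ : cintegralDomain B f) (ψ : H) :
    cintegralForm B f φ ψ = (B ψ φ).cintegral f := rfl

def cintegralLeft (φ : H) (hφ : ∀ ψ, (B ψ φ).CIntegrable f) : H →ₗ⋆[ℂ] ℂ :=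
  cintegralₗ f ∘ₛₗ (B.flip φ).codRestrict _ hφ

variable {B f}

theorem exists_inner_eq_cintegral [CompleteSpace H]
    (hB : ∀ φ, ∃ C, ∀ ψ s, MeasurableSet s → ‖B ψ φ s‖ ≤ C * ‖ψ‖) (hf : Measurable f) {φ : H}
    (hφ : φ ∈ cintegralDomain B f) : ∃ w, ∀ ψ, ⟪ψ, w⟫ = (B ψ φ).cintegral f := by
  obtain ⟨C, hC⟩ := hB φ
  have hbound (n : ℕ) (ψ : H) :
      ‖(B ψ φ).cintegral (truncation f n)‖ ≤ n * (4 * C) * ‖ψ‖ := by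
    rw [mul_assoc, mul_assoc]
    exact norm_cintegral_le_of_forall_norm_le (cintegrable_truncation hf n _) n.cast_nonneg
      (norm_truncation_le_nat n) (hC ψ)
  let T (n : ℕ) : H →L⋆[ℂ] ℂ :=
    (cintegralLeft B (truncation f n) φ fun _ => cintegrable_truncation hf n _).mkContinuous
      _ (hbound n)
  have hT : Tendsto (fun n ψ => T n ψ) atTop (𝓝 fun ψ => (B ψ φ).cintegral f) :=
    tendsto_pi_nhds.2 fun ψ => tendsto_cintegral_of_dominated_convergence (fun x => ‖f x‖)
      (fun n => (measurable_truncation hf n).aestronglyMeasurable) norm_truncation_le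
      (mem_cintegralDomain.1 hφ ψ).norm tendsto_truncation
  exact exists_forall_inner_eq_of_conjLinear (continuousLinearMapOfTendsto T hT)

end Sesquilinear

section OperatorMeasure

variable {Ω H : Type*} [MeasurableSpace Ω] [NormedAddCommGroup H] [InnerProductSpace ℂ H]
  {E : Set Ω → H →L[ℂ] H} {ν : H → H → ComplexMeasure Ω}

def sesqOfInner (hν : ∀ ψ φ s, MeasurableSet s → ν ψ φ s = ⟪ψ, E s φ⟫) :
    H →ₗ⋆[ℂ] H →ₗ[ℂ] ComplexMeasure Ω :=
  LinearMap.mk₂'ₛₗ _ _ ν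
    (fun ψ₁ ψ₂ φ => by ext s hs; simp [hν _ _ s hs])
    (fun c ψ φ => by ext s hs; simp [hν _ _ s hs, mul_comm])
    (fun ψ φ₁ φ₂ => by ext s hs; simp [hν _ _ s hs])
    (fun c ψ φ => by ext s hs; simp [hν _ _ s hs])

@[simp]
lemma sesqOfInner_apply (hν : ∀ ψ φ s, MeasurableSet s → ν ψ φ s = ⟪ψ, E s φ⟫) (ψ φ : H) :
    sesqOfInner hν ψ φ = ν ψ φ := rfl

lemma exists_norm_apply_le_of_inner [CompleteSpace H]
    (hν : ∀ ψ φ s, MeasurableSet s → ν ψ φ s = ⟪ψ, E s φ⟫) (φ : H) :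
    ∃ C, ∀ ψ s, MeasurableSet s → ‖ν ψ φ s‖ ≤ C * ‖ψ‖ := by
  obtain ⟨C, hC⟩ := exists_norm_le_of_forall_norm_inner_le (𝕜 := ℂ)
    (fun s : {s : Set Ω // MeasurableSet s} => E s φ)
    fun ψ => ⟨(ν ψ φ).bound, fun s => (hν ψ φ s s.2).symm ▸ VectorMeasure.norm_apply_le_bound⟩
  refine ⟨C, fun ψ s hs => ?_⟩
  rw [hν ψ φ s hs, mul_comm]
  exact (norm_inner_le_norm ψ _).trans (by gcongr; exact hC ⟨s, hs⟩)

end OperatorMeasure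

end MeasureTheory

theorem stmt0_general {Ω : Type*} [MeasurableSpace Ω] {H : Type*} [NormedAddCommGroup H]
    [InnerProductSpace ℂ H] [CompleteSpace H]
    (E : Set Ω → H →L[ℂ] H)
    (ν : H → H → MeasureTheory.ComplexMeasure Ω)
    (hν : ∀ (ψ φ : H) (B : Set Ω), MeasurableSet B → ν ψ φ B = ⟪ψ, E B φ⟫)
    (f : Ω → ℂ) (hf : Measurable f) :
    ∃ D : Submodule ℂ H,
      (D : Set H) = {φ : H | ∀ ψ : H, (ν ψ φ).CIntegrable f} ∧
      ∃! L : D →ₗ[ℂ] H, ∀ (φ : D) (ψ : H), ⟪ψ, L φ⟫ = (ν ψ (φ : H)).cintegral f := by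
  have hB (φ : H) : ∃ C, ∀ ψ s, MeasurableSet s → ‖sesqOfInner hν ψ φ s‖ ≤ C * ‖ψ‖ := by
    simpa only [sesqOfInner_apply] using exists_norm_apply_le_of_inner hν φ
  refine ⟨cintegralDomain (sesqOfInner hν) f, Set.ext fun _ => mem_cintegralDomain, ?_⟩
  simpa only [cintegralForm_apply, sesqOfInner_apply] using
    existsUnique_linearMap_inner_eq (cintegralForm (sesqOfInner hν) f)
      fun φ => exists_inner_eq_cintegral hB hf φ.2

/-- For every positive operator measure `E` (with associated complex measures
`ν ψ φ = ⟨ψ, E(·)φ⟩`) and every measurable `f : Ω → ℂ`, the set `D(f,E)` is a linear subspace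
of `H`, and there is a unique linear operator `L(f,E)` on it with
`⟨ψ, L(f,E)φ⟩ = ∫ f dE_{ψ,φ}` for all `ψ ∈ H`, `φ ∈ D(f,E)`. -/
theorem stmt0 {Ω : Type*} [MeasurableSpace Ω] {H : Type*} [NormedAddCommGroup H]
    [InnerProductSpace ℂ H] [CompleteSpace H]
    (E : Set Ω → H →L[ℂ] H) (hEpos : ∀ B : Set Ω, MeasurableSet B → (E B).IsPositive)
    (ν : H → H → MeasureTheory.ComplexMeasure Ω)
    (hν : ∀ (ψ φ : H) (B : Set Ω), MeasurableSet B → ν ψ φ B = ⟪ψ, E B φ⟫)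
    (f : Ω → ℂ) (hf : Measurable f) :
    ∃ D : Submodule ℂ H,
      (D : Set H) = {φ : H | ∀ ψ : H, (ν ψ φ).CIntegrable f} ∧
      ∃! L : D →ₗ[ℂ] H, ∀ (φ : D) (ψ : H), ⟪ψ, L φ⟫ = (ν ψ (φ : H)).cintegral f :=
  stmt0_general E ν hν f hf
end
end

section
/- Let (Ω, 𝒜, μ) be a measure space, H a separable complex Hilbert space, and Λ : Ω → L(H) a map such that (i) ω ↦ ⟨ψ, Λ(ω)φ⟩ is measurable for all ψ, φ ∈ H, and (ii) ∫_B ‖Λ(ω)φ‖ dμ(ω) < ∞ for each φ ∈ H and each B ∈ 𝒜 with μ(B) < ∞. Then for each measurable function f : Ω → ℂ there exists a linear operator Γ_Λ(f) in H whose domain is D(Γ_Λ(f)) = {φ ∈ H : ω ↦ f(ω)⟨ψ, Λ(ω)φ⟩ is μ-integrable for each ψ ∈ H} and which satisfies ⟨ψ, Γ_Λ(f)φ⟩ = ∫ f(ω)⟨ψ, Λ(ω)φ⟩ dμ(ω) for all ψ ∈ H and φ ∈ D(Γ_Λ(f)). -/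
/-!
Fix `φ` in the domain. The map sending `ψ` to `ω ↦ conj (f ω ⟪ψ, Λ ω φ⟫)` is a linear map from `H`
into `L¹(μ)` with closed graph: an `L¹`-convergent sequence has an a.e. convergent subsequence, and
each integrand is continuous in `ψ`. By the closed graph theorem it is bounded, so
`ψ ↦ conj ∫ f ⟪ψ, Λ φ⟫ dμ` is a bounded linear functional, and its Riesz representative is
`Γ_Λ(f) φ`. Linearity in `φ` follows from uniqueness of the representative.
-/

open MeasureTheory Filter Topology

noncomputable section

local notation "⟪" x ", " y "⟫" => @inner ℂ _ _ x y

namespace LinearMap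

variable {Ω 𝕜 E F : Type*} [MeasurableSpace Ω] {μ : Measure Ω} [RCLike 𝕜]
  [NormedAddCommGroup E] [NormedSpace 𝕜 E]
  [NormedAddCommGroup F] [NormedSpace 𝕜 F]

def toL1 (g : E →ₗ[𝕜] Ω → F) (hg : ∀ x, Integrable (g x) μ) : E →ₗ[𝕜] Ω →₁[μ] F where
  toFun x := (hg x).toL1 _
  map_add' x y := by simp only [map_add]; exact Integrable.toL1_add _ _ (hg x) (hg y)
  map_smul' c x := by simp only [map_smul, RingHom.id_apply]; exact Integrable.toL1_smul _ (hg x) c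

theorem continuous_toL1 [CompleteSpace E] [CompleteSpace F] (g : E →ₗ[𝕜] Ω → F)
    (hg : ∀ x, Integrable (g x) μ) (hcont : ∀ ω, Continuous fun x => g x ω) :
    Continuous (g.toL1 hg) := by
  refine (g.toL1 hg).continuous_of_seq_closed_graph fun u x y hu hgu => ?_
  obtain ⟨ns, hns, hae⟩ := (tendstoInMeasure_of_tendsto_Lp hgu).exists_seq_tendsto_ae
  have hrep : ∀ᵐ ω ∂μ, ∀ n, (g.toL1 hg (u n) : Ω → F) ω = g (u n) ω :=
    ae_all_iff.2 fun n => (hg (u n)).coeFn_toL1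
  refine Lp.ext ?_
  filter_upwards [hrep, (hg x).coeFn_toL1, hae] with ω hun hx hy
  rw [toL1, coe_mk, AddHom.coe_mk, hx]
  refine tendsto_nhds_unique (hy.congr fun i => hun (ns i)) ?_
  exact ((hcont ω).tendsto x).comp (hu.comp hns.tendsto_atTop)

variable [NormedSpace ℝ F] [SMulCommClass ℝ 𝕜 F] [CompleteSpace E] [CompleteSpace F]

def integralCLM (g : E →ₗ[𝕜] Ω → F) (hg : ∀ x, Integrable (g x) μ)
    (hcont : ∀ ω, Continuous fun x => g x ω) : E →L[𝕜] F :=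
  (L1.integralCLM' 𝕜).comp ⟨g.toL1 hg, g.continuous_toL1 hg hcont⟩

theorem integralCLM_apply (g : E →ₗ[𝕜] Ω → F) (hg : ∀ x, Integrable (g x) μ)
    (hcont : ∀ ω, Continuous fun x => g x ω) (x : E) :
    g.integralCLM hg hcont x = ∫ ω, g x ω ∂μ := by
  rw [integral_eq _ (hg x), L1.integral_eq' 𝕜]
  rfl

end LinearMap

section WeakIntegral

open scoped InnerProductSpace

variable {Ω 𝕜 E F : Type*} [MeasurableSpace Ω] [RCLike 𝕜] [AddCommGroup E] [Module 𝕜 E]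
  [NormedAddCommGroup F] [InnerProductSpace 𝕜 F]

def weakIntegralDomain (A : Ω → E →ₗ[𝕜] F) (μ : Measure Ω) : Submodule 𝕜 E where
  carrier := {x | ∀ y, Integrable (fun ω => ⟪y, A ω x⟫_𝕜) μ}
  add_mem' hx hy z := by
    simp only [map_add, inner_add_right]
    exact (hx z).add (hy z)
  zero_mem' y := by
    simp only [map_zero, inner_zero_right]
    exact integrable_zero Ω 𝕜 μ
  smul_mem' c x hx y := by simpa only [map_smul, inner_smul_right] using (hx y).const_mul c

variable {A : Ω → E →ₗ[𝕜] F} {μ : Measure Ω}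

theorem integrable_inner_left_of_mem_weakIntegralDomain {x : E}
    (hx : x ∈ weakIntegralDomain A μ) (y : F) : Integrable (fun ω => ⟪A ω x, y⟫_𝕜) μ := by
  simpa only [ContinuousLinearEquiv.coe_coe, RCLike.conjCLE_apply, inner_conj_symm] using
    (RCLike.conjCLE (K := 𝕜)).toContinuousLinearMap.integrable_comp (hx y)

variable [CompleteSpace F]

variable (A μ) in
def weakIntegralFunctional (x : weakIntegralDomain A μ) : StrongDual 𝕜 F :=
  LinearMap.integralCLM (μ := μ) (LinearMap.pi fun ω => (innerSL 𝕜 (A ω x)).toLinearMap)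
    (integrable_inner_left_of_mem_weakIntegralDomain x.2) fun ω => (innerSL 𝕜 (A ω x)).continuous

theorem weakIntegralFunctional_apply (x : weakIntegralDomain A μ) (y : F) :
    weakIntegralFunctional A μ x y = ∫ ω, ⟪A ω x, y⟫_𝕜 ∂μ :=
  LinearMap.integralCLM_apply _ _ _ y

theorem inner_toDual_symm_weakIntegralFunctional (x : weakIntegralDomain A μ) (y : F) :
    ⟪y, (InnerProductSpace.toDual 𝕜 F).symm (weakIntegralFunctional A μ x)⟫_𝕜 =
      ∫ ω, ⟪y, A ω x⟫_𝕜 ∂μ := by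
  rw [← inner_conj_symm, InnerProductSpace.toDual_symm_apply, weakIntegralFunctional_apply,
    ← integral_conj]
  simp_rw [inner_conj_symm]

variable (A μ) in
def weakIntegral : weakIntegralDomain A μ →ₗ[𝕜] F where
  toFun x := (InnerProductSpace.toDual 𝕜 F).symm (weakIntegralFunctional A μ x)
  map_add' x x' := ext_inner_left 𝕜 fun y => by
    simp only [inner_add_right, inner_toDual_symm_weakIntegralFunctional, Submodule.coe_add,
      map_add]
    exact integral_add (x.2 y) (x'.2 y)
  map_smul' c x := ext_inner_left 𝕜 fun y => by
    simp only [inner_smul_right, inner_toDual_symm_weakIntegralFunctional, Submodule.coe_smul,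
      map_smul, RingHom.id_apply]
    exact integral_const_mul c _

theorem inner_weakIntegral (x : weakIntegralDomain A μ) (y : F) :
    ⟪y, weakIntegral A μ x⟫_𝕜 = ∫ ω, ⟪y, A ω x⟫_𝕜 ∂μ :=
  inner_toDual_symm_weakIntegralFunctional x y

end WeakIntegral

theorem stmt6_general {Ω : Type*} [MeasurableSpace Ω] (μ : Measure Ω)
    {H : Type*} [NormedAddCommGroup H] [InnerProductSpace ℂ H] [CompleteSpace H]
    (Λ : Ω → H →L[ℂ] H)
    (f : Ω → ℂ) :
    ∃ D : Submodule ℂ H,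
      (D : Set H) = {φ : H | ∀ ψ : H, Integrable (fun ω => f ω * ⟪ψ, Λ ω φ⟫) μ} ∧
      ∃ L : D →ₗ[ℂ] H, ∀ (φ : D) (ψ : H),
        ⟪ψ, L φ⟫ = ∫ ω, f ω * ⟪ψ, Λ ω (φ : H)⟫ ∂μ := by
  let A : Ω → H →ₗ[ℂ] H := fun ω => f ω • (Λ ω : H →ₗ[ℂ] H)
  have inner_A : ∀ ω ψ φ, ⟪ψ, A ω φ⟫ = f ω * ⟪ψ, Λ ω φ⟫ := fun _ _ _ => inner_smul_right _ _ _
  refine ⟨weakIntegralDomain A μ, ?_, weakIntegral A μ, fun φ ψ => ?_⟩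
  · ext φ
    simp only [weakIntegralDomain, ← inner_A]
    rfl
  · simp only [inner_weakIntegral, inner_A]

/-- Let `(Ω, 𝒜, μ)` be a measure space, `H` a separable complex Hilbert space
and `Λ : Ω → L(H)` a map such that (i) `ω ↦ ⟨ψ, Λ(ω)φ⟩` is measurable for all `ψ, φ`, and
(ii) `∫_B ‖Λ(ω)φ‖ dμ < ∞` for each `φ` and each `B` of finite measure. Then for each
measurable `f : Ω → ℂ` there exists a linear operator `Γ_Λ(f)` with domain
`{φ | ω ↦ f(ω)⟨ψ, Λ(ω)φ⟩ is μ-integrable for each ψ}` satisfying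
`⟨ψ, Γ_Λ(f)φ⟩ = ∫ f(ω)⟨ψ, Λ(ω)φ⟩ dμ(ω)`. -/
theorem stmt6 {Ω : Type*} [MeasurableSpace Ω] (μ : Measure Ω)
    {H : Type*} [NormedAddCommGroup H] [InnerProductSpace ℂ H] [CompleteSpace H]
    [TopologicalSpace.SeparableSpace H]
    (Λ : Ω → H →L[ℂ] H)
    (hmeas : ∀ ψ φ : H, Measurable fun ω => ⟪ψ, Λ ω φ⟫)
    (hint : ∀ (φ : H) (B : Set Ω), MeasurableSet B → μ B < ⊤ →
      IntegrableOn (fun ω => ‖Λ ω φ‖) B μ)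
    (f : Ω → ℂ) (hf : Measurable f) :
    ∃ D : Submodule ℂ H,
      (D : Set H) = {φ : H | ∀ ψ : H, Integrable (fun ω => f ω * ⟪ψ, Λ ω φ⟫) μ} ∧
      ∃ L : D →ₗ[ℂ] H, ∀ (φ : D) (ψ : H),
        ⟪ψ, L φ⟫ = ∫ ω, f ω * ⟪ψ, Λ ω (φ : H)⟫ ∂μ :=
  stmt6_general μ Λ f
end
end

section
/- Let μ be a probability measure on ℬ(ℝ) having a density with respect to Lebesgue measure given by an even function, and such that ∫_0^∞ x dμ(x) = ∞. Define the positive operator measure E : ℬ(ℝ) → L(H) by E(B) = μ(B)·I, and let f(x) = x. Then D(f,E) = {0}, while for every φ ∈ H and every n ∈ ℕ one has L(f̃_n, E)φ = 0, so that the limit lim_{n→∞} L(f̃_n,E)φ exists for every φ ∈ H (i.e., D^{f,E} = H). In particular the inclusion D(f,E) ⊆ D^{f,E} := {φ ∈ H : lim_{n→∞} L(f̃_n,E)φ exists} can be proper. -/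
/-!
Since `E(B) = μ(B)·I`, every `ν ψ φ` is the finite measure `μ` scaled by `⟪ψ, φ⟫`. The even
density makes `μ` invariant under `x ↦ -x`, and each truncation of the identity is odd, so all
the truncated integrals vanish. On the other hand `ν φ φ = ‖φ‖² μ`, and `x ↦ x` is not
`μ`-integrable, so `f` is `ν φ φ`-integrable only when `φ = 0`.
-/

open MeasureTheory Filter Topology ComplexConjugate
open scoped ENNReal NNReal

noncomputable section

local notation "⟪" x ", " y "⟫" => @inner ℂ _ _ x y

/-- The truncation `f̃ₙ` of `f` : `f̃ₙ(x) = f(x)` if `|f(x)| ≤ n`, and `f̃ₙ(x) = 0` otherwise. -/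
def trunc {Ω : Type*} (f : Ω → ℂ) (n : ℕ) : Ω → ℂ :=
  fun x => if ‖f x‖ ≤ (n : ℝ) then f x else 0

namespace MeasureTheory

theorem Measure.isNegInvariant_withDensity {G : Type*} [MeasurableSpace G] [InvolutiveNeg G]
    [MeasurableNeg G] (μ : Measure G) [μ.IsNegInvariant] {ρ : G → ℝ≥0∞}
    (hρ : ∀ x, ρ (-x) = ρ x) : (μ.withDensity ρ).IsNegInvariant := by
  refine ⟨Measure.ext fun B hB ↦ ?_⟩
  have hB' : MeasurableSet (Neg.neg ⁻¹' B) := hB.preimage measurable_neg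
  rw [Measure.neg, Measure.map_apply measurable_neg hB, withDensity_apply _ hB',
    withDensity_apply _ hB, ← lintegral_indicator hB', ← lintegral_indicator hB,
    ← lintegral_neg_eq_self]
  congr 1 with x
  by_cases hx : x ∈ B
  · simp [hx, hρ]
  · simp [hx]

theorem integral_eq_zero_of_odd {G E : Type*} [MeasurableSpace G] [AddGroup G] [MeasurableNeg G]
    [NormedAddCommGroup E] [NormedSpace ℝ E] (μ : Measure G) [μ.IsNegInvariant] {f : G → E}
    (hf : ∀ x, f (-x) = -f x) : ∫ x, f x ∂μ = 0 := by
  have h := integral_neg_eq_self f μ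
  simp only [hf, integral_neg] at h
  have h2 : (2 : ℝ) • ∫ x, f x ∂μ = 0 := by
    rw [two_smul]
    nth_rewrite 1 [← h]
    exact neg_add_cancel _
  exact (smul_eq_zero.mp h2).resolve_left two_ne_zero

variable {Ω : Type*} [MeasurableSpace Ω]

theorem Measure.toJordanDecomposition_toSignedMeasure (m : Measure Ω) [IsFiniteMeasure m] :
    m.toSignedMeasure.toJordanDecomposition = ⟨m, 0, .zero_right⟩ := by
  apply SignedMeasure.toJordanDecomposition_eq
  change m.toSignedMeasure = m.toSignedMeasure - (0 : Measure Ω).toSignedMeasure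
  rw [Measure.toSignedMeasure_zero, sub_zero]

namespace SignedMeasure

variable (m : Measure Ω) [IsFiniteMeasure m]

theorem cintegral_smul_toSignedMeasure (r : ℝ) (g : Ω → ℂ) :
    (r • m.toSignedMeasure).cintegral g = r * ∫ x, g x ∂m := by
  rw [cintegral, toJordanDecomposition_smul_real, m.toJordanDecomposition_toSignedMeasure]
  rcases le_or_gt 0 r with hr | hr
  · rw [JordanDecomposition.real_smul_posPart_nonneg _ _ hr,
      JordanDecomposition.real_smul_negPart_nonneg _ _ hr]
    simp [NNReal.smul_def, Real.coe_toNNReal r hr]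
  · rw [JordanDecomposition.real_smul_posPart_neg _ _ hr,
      JordanDecomposition.real_smul_negPart_neg _ _ hr]
    simp [NNReal.smul_def, Real.coe_toNNReal _ (neg_nonneg.mpr hr.le)]

theorem totalVariation_smul_toSignedMeasure {r : ℝ} (hr : 0 ≤ r) :
    (r • m.toSignedMeasure).totalVariation = r.toNNReal • m := by
  rw [totalVariation, toJordanDecomposition_smul_real, m.toJordanDecomposition_toSignedMeasure,
    JordanDecomposition.real_smul_posPart_nonneg _ _ hr,
    JordanDecomposition.real_smul_negPart_nonneg _ _ hr]
  simp

end SignedMeasure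

namespace ComplexMeasure

theorem cintegrable_zero (g : Ω → ℂ) : (0 : ComplexMeasure Ω).CIntegrable g := by
  simp [CIntegrable, tv, map_zero, SignedMeasure.totalVariation_zero]

variable {ν : ComplexMeasure Ω} {m : Measure Ω} [IsFiniteMeasure m] {c : ℂ}

theorem re_eq_smul_toSignedMeasure (hν : ∀ B, MeasurableSet B → ν B = (m B).toReal * c) :
    re ν = c.re • m.toSignedMeasure := by
  ext B hB
  change (ν B).re = _
  simp [hν B hB, m.toSignedMeasure_apply_measurable hB, Measure.real, mul_comm]

theorem im_eq_smul_toSignedMeasure (hν : ∀ B, MeasurableSet B → ν B = (m B).toReal * c) :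
    im ν = c.im • m.toSignedMeasure := by
  ext B hB
  change (ν B).im = _
  simp [hν B hB, m.toSignedMeasure_apply_measurable hB, Measure.real, mul_comm]

theorem cintegral_eq_mul_integral (hν : ∀ B, MeasurableSet B → ν B = (m B).toReal * c)
    (g : Ω → ℂ) : ν.cintegral g = c * ∫ x, g x ∂m := by
  rw [cintegral, re_eq_smul_toSignedMeasure hν, im_eq_smul_toSignedMeasure hν,
    SignedMeasure.cintegral_smul_toSignedMeasure, SignedMeasure.cintegral_smul_toSignedMeasure]
  nth_rewrite 3 [← Complex.re_add_im c]
  ring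

theorem CIntegrable.integrable (hν : ∀ B, MeasurableSet B → ν B = (m B).toReal * c)
    (hc : 0 < c.re) {g : Ω → ℂ} (hg : ν.CIntegrable g) : Integrable g m := by
  have hre : Integrable g (re ν).totalVariation :=
    Integrable.mono_measure hg (Measure.le_add_right le_rfl)
  rw [re_eq_smul_toSignedMeasure hν,
    SignedMeasure.totalVariation_smul_toSignedMeasure _ hc.le] at hre
  exact (integrable_smul_measure (c := (c.re.toNNReal : ℝ≥0∞)) (by simpa using hc)
    ENNReal.coe_ne_top).mp hre

end ComplexMeasure

theorem not_integrable_ofReal_of_setLIntegral_Ioi_eq_top {μ : Measure ℝ}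
    (h : ∫⁻ x in Set.Ioi 0, ENNReal.ofReal x ∂μ = ⊤) : ¬ Integrable (fun x : ℝ ↦ (x : ℂ)) μ := by
  intro hint
  have hle : ∫⁻ x in Set.Ioi 0, ENNReal.ofReal x ∂μ ≤ ∫⁻ x, ‖(x : ℂ)‖ₑ ∂μ :=
    (setLIntegral_le_lintegral _ _).trans' <| lintegral_mono fun x ↦ by
      simpa [← ofReal_norm] using Real.ofReal_le_enorm x
  exact hint.2.ne (top_unique (h ▸ hle))

end MeasureTheory

theorem trunc_apply_neg {G : Type*} [Neg G] {f : G → ℂ} (hf : ∀ x, f (-x) = -f x) (n : ℕ)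
    (x : G) : trunc f n (-x) = -trunc f n x := by
  by_cases hx : ‖f x‖ ≤ n <;> simp [trunc, hf, hx]

theorem stmt7_general {H : Type*} [NormedAddCommGroup H] [InnerProductSpace ℂ H]
    (μ : Measure ℝ) [IsProbabilityMeasure μ]
    (ρ : ℝ → ℝ≥0∞) (hρ : μ = MeasureTheory.volume.withDensity ρ)
    (hρeven : ∀ x : ℝ, ρ (-x) = ρ x)
    (hinf : ∫⁻ x in Set.Ioi (0 : ℝ), ENNReal.ofReal x ∂μ = ⊤)
    (E : Set ℝ → H →L[ℂ] H) (hE : ∀ B : Set ℝ, E B = (μ B).toReal • (1 : H →L[ℂ] H))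
    (ν : H → H → MeasureTheory.ComplexMeasure ℝ)
    (hν : ∀ (ψ φ : H) (B : Set ℝ), MeasurableSet B → ν ψ φ B = ⟪ψ, E B φ⟫)
    (f : ℝ → ℂ) (hf : f = fun x : ℝ => (x : ℂ)) :
    ({φ : H | ∀ ψ : H, (ν ψ φ).CIntegrable f} = {0} ∧
     (∀ (ψ φ : H) (n : ℕ), (ν ψ φ).cintegral (trunc f n) = 0)) ∧
     ∀ (φ : H) (η : ℕ → H),
       (∀ (n : ℕ) (ψ : H), ⟪ψ, η n⟫ = (ν ψ φ).cintegral (trunc f n)) →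
       ∃ ξ : H, Tendsto η atTop (𝓝 ξ) := by
  subst hf
  have hνμ (ψ φ : H) (B : Set ℝ) (hB : MeasurableSet B) : ν ψ φ B = (μ B).toReal * ⟪ψ, φ⟫ := by
    rw [hν ψ φ B hB, hE, ← Complex.coe_smul]
    simp
  have : μ.IsNegInvariant := hρ ▸ volume.isNegInvariant_withDensity hρeven
  have hL (ψ φ : H) (n : ℕ) : (ν ψ φ).cintegral (trunc (fun x : ℝ ↦ (x : ℂ)) n) = 0 := by
    rw [ComplexMeasure.cintegral_eq_mul_integral (hνμ ψ φ),
      integral_eq_zero_of_odd μ (trunc_apply_neg (fun x ↦ by push_cast; rfl) n), mul_zero]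
  refine ⟨⟨Set.eq_singleton_iff_unique_mem.mpr ⟨fun ψ ↦ ?_, fun φ hφ ↦ ?_⟩, hL⟩,
    fun φ η hη ↦ ⟨0, ?_⟩⟩
  · convert ComplexMeasure.cintegrable_zero _
    ext B hB
    simp [hνμ ψ 0 B hB]
  · by_contra hφ0
    have hc : 0 < (⟪φ, φ⟫ : ℂ).re := by
      rw [← RCLike.re_to_complex, inner_self_eq_norm_sq]
      exact pow_pos (norm_pos_iff.mpr hφ0) 2
    exact not_integrable_ofReal_of_setLIntegral_Ioi_eq_top hinf
      ((hφ φ).integrable (hνμ φ φ) hc)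
  · have hη0 (n : ℕ) : η n = 0 := inner_self_eq_zero.mp ((hη n (η n)).trans (hL (η n) φ n))
    rw [funext hη0]
    exact tendsto_const_nhds

/-- Let `μ` be a probability measure on `ℬ(ℝ)` with an even density with
respect to Lebesgue measure and with `∫_0^∞ x dμ(x) = ∞`. Let `E(B) = μ(B)·I` and `f = id`.
Then `D(f,E) = {0}`, while `L(f̃ₙ,E)φ = 0` for every `φ` and `n`; in particular the limit
`limₙ L(f̃ₙ,E)φ` exists for every `φ ∈ H`, i.e. `D^{f,E} = H`, and the inclusion
`D(f,E) ⊆ D^{f,E}` can be proper. -/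
theorem stmt7 {H : Type*} [NormedAddCommGroup H] [InnerProductSpace ℂ H] [CompleteSpace H]
    (μ : Measure ℝ) [IsProbabilityMeasure μ]
    (ρ : ℝ → ℝ≥0∞) (hρ : μ = MeasureTheory.volume.withDensity ρ)
    (hρeven : ∀ x : ℝ, ρ (-x) = ρ x)
    (hinf : ∫⁻ x in Set.Ioi (0 : ℝ), ENNReal.ofReal x ∂μ = ⊤)
    (E : Set ℝ → H →L[ℂ] H) (hE : ∀ B : Set ℝ, E B = (μ B).toReal • (1 : H →L[ℂ] H))
    (ν : H → H → MeasureTheory.ComplexMeasure ℝ)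
    (hν : ∀ (ψ φ : H) (B : Set ℝ), MeasurableSet B → ν ψ φ B = ⟪ψ, E B φ⟫)
    (f : ℝ → ℂ) (hf : f = fun x : ℝ => (x : ℂ)) :
    ({φ : H | ∀ ψ : H, (ν ψ φ).CIntegrable f} = {0} ∧
     (∀ (ψ φ : H) (n : ℕ), (ν ψ φ).cintegral (trunc f n) = 0)) ∧
     ∀ (φ : H) (η : ℕ → H),
       (∀ (n : ℕ) (ψ : H), ⟪ψ, η n⟫ = (ν ψ φ).cintegral (trunc f n)) →
       ∃ ξ : H, Tendsto η atTop (𝓝 ξ) :=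
  stmt7_general μ ρ hρ hρeven hinf E hE ν hν f hf
end
end

section
/- Let G be a locally compact second countable unimodular topological group with Haar measure λ, H a complex Hilbert space, and U : G → U(H) a weakly measurable projective unitary representation (U(g)U(h) = c(g,h)U(gh) with |c(g,h)| = 1) satisfying the square integrability condition ∫_G |⟨ψ, U(g)φ⟩|² dλ(g) = d for some constant d > 0 and all unit vectors ψ, φ ∈ H. Then for all nonzero φ, ψ ∈ H there exists g ∈ G with ⟨ψ, U(g)φ⟩ ≠ 0; consequently, for every nonzero φ ∈ H the closed linear span of {U(g)φ : g ∈ G} equals H, i.e., the projective representation U is irreducible. -/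
/-! If `ψ` were orthogonal to every `U g φ`, the square-integrability integral of the normalized
vectors would vanish, contradicting `d > 0`. Hence no nonzero vector is orthogonal to an orbit
`{U g φ}`, i.e. the orbit spans a dense subspace. -/

open MeasureTheory

local notation "⟪" x ", " y "⟫" => @inner ℂ _ _ x y

section

variable {H : Type*} [NormedAddCommGroup H] [InnerProductSpace ℂ H]

theorem Submodule.topologicalClosure_span_range_eq_top_of_forall_exists_inner_ne_zero
    [CompleteSpace H] {ι : Type*} (x : ι → H) (h : ∀ ψ : H, ψ ≠ 0 → ∃ i, ⟪ψ, x i⟫ ≠ 0) :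
    (Submodule.span ℂ (Set.range x)).topologicalClosure = ⊤ := by
  rw [Submodule.topologicalClosure_eq_top_iff, Submodule.eq_bot_iff]
  intro ψ hψ
  by_contra hψ0
  obtain ⟨i, hi⟩ := h ψ hψ0
  have horth : ⟪x i, ψ⟫ = 0 :=
    (Submodule.mem_orthogonal _ _).1 hψ _ (Submodule.subset_span ⟨i, rfl⟩)
  exact hi (by rw [← inner_conj_symm, horth, map_zero])

theorem exists_inner_apply_ne_zero_of_integral_ne_zero {α : Type*} [MeasurableSpace α]
    (μ : Measure α) (U : α → H →L[ℂ] H) {ψ φ : H} (a b : ℂ)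
    (h : ∫ g, ‖⟪a • ψ, U g (b • φ)⟫‖ ^ 2 ∂μ ≠ 0) : ∃ g, ⟪ψ, U g φ⟫ ≠ 0 := by
  by_contra! hzero
  simp [hzero] at h

end

theorem stmt8_general {G : Type*} [MeasurableSpace G] (lam : Measure G)
    {H : Type*} [NormedAddCommGroup H] [InnerProductSpace ℂ H] [CompleteSpace H]
    (U : G → H →L[ℂ] H)
    (d : ℝ) (hd : 0 < d)
    (hsq : ∀ ψ φ : H, ‖ψ‖ = 1 → ‖φ‖ = 1 → ∫ g, ‖⟪ψ, U g φ⟫‖ ^ 2 ∂lam = d) :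
    (∀ φ ψ : H, φ ≠ 0 → ψ ≠ 0 → ∃ g : G, ⟪ψ, U g φ⟫ ≠ 0) ∧
    ∀ φ : H, φ ≠ 0 →
      (Submodule.span ℂ (Set.range fun g => U g φ)).topologicalClosure = ⊤ := by
  have orbit_not_orthogonal : ∀ φ ψ : H, φ ≠ 0 → ψ ≠ 0 → ∃ g : G, ⟪ψ, U g φ⟫ ≠ 0 :=
    fun φ ψ hφ hψ => exists_inner_apply_ne_zero_of_integral_ne_zero lam U _ _ <| by
      rw [hsq _ _ (norm_smul_inv_norm hψ) (norm_smul_inv_norm hφ)]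
      exact hd.ne'
  exact ⟨orbit_not_orthogonal, fun φ hφ =>
    Submodule.topologicalClosure_span_range_eq_top_of_forall_exists_inner_ne_zero _
      fun ψ hψ => orbit_not_orthogonal φ ψ hφ hψ⟩

/-- Let `G` be a locally compact second countable unimodular topological
group with Haar measure `λ`, and `U : G → U(H)` a weakly measurable projective unitary
representation satisfying the square integrability condition
`∫ |⟨ψ, U(g)φ⟩|² dλ(g) = d > 0` for all unit vectors `ψ, φ`. Then for all nonzero `φ, ψ`
there is `g` with `⟨ψ, U(g)φ⟩ ≠ 0`; consequently the closed linear span of `{U(g)φ : g ∈ G}`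
is all of `H` for every nonzero `φ`, i.e. `U` is irreducible. -/
theorem stmt8 {G : Type*} [Group G] [TopologicalSpace G] [IsTopologicalGroup G]
    [LocallyCompactSpace G] [SecondCountableTopology G]
    [MeasurableSpace G] [BorelSpace G]
    (lam : Measure G) [lam.IsHaarMeasure] [lam.IsMulRightInvariant]
    {H : Type*} [NormedAddCommGroup H] [InnerProductSpace ℂ H] [CompleteSpace H]
    (U : G → H →L[ℂ] H)
    (hUiso : ∀ (g : G) (φ : H), ‖U g φ‖ = ‖φ‖)
    (hUsurj : ∀ g : G, Function.Surjective (U g))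
    (c : G → G → ℂ) (hc : ∀ g h : G, ‖c g h‖ = 1)
    (hproj : ∀ g h : G, (U g).comp (U h) = c g h • U (g * h))
    (hwmeas : ∀ ψ φ : H, Measurable fun g => ⟪ψ, U g φ⟫)
    (d : ℝ) (hd : 0 < d)
    (hsq : ∀ ψ φ : H, ‖ψ‖ = 1 → ‖φ‖ = 1 → ∫ g, ‖⟪ψ, U g φ⟫‖ ^ 2 ∂lam = d) :
    (∀ φ ψ : H, φ ≠ 0 → ψ ≠ 0 → ∃ g : G, ⟪ψ, U g φ⟫ ≠ 0) ∧
    ∀ φ : H, φ ≠ 0 →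
      (Submodule.span ℂ (Set.range fun g => U g φ)).topologicalClosure = ⊤ :=
  stmt8_general lam U d hd hsq
end

section
/- Let G be a connected, locally compact, second countable, unimodular topological group with Haar measure λ, and U : G → U(H) a strongly continuous projective unitary representation satisfying ∫_G |⟨ψ, U(g)φ⟩|² dλ(g) = d > 0 for all unit vectors ψ, φ. Let T be a positive trace-one operator on H and let E^T : ℬ(G) → L(H) be the covariant observable defined weakly by ⟨ψ, E^T(B)φ⟩ = d⁻¹ ∫_B ⟨ψ, U(g)TU(g)*φ⟩ dλ(g). Then the only projections in the range of E^T are the zero operator O and the identity I. -/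
open MeasureTheory Filter Topology
open scoped ENNReal

noncomputable section

local notation "⟪" x ", " y "⟫" => @inner ℂ _ _ x y

/-- Transfer the trace condition, stated for Hilbert bases indexed by types in an arbitrary
fixed universe, to a Hilbert basis indexed by a `Type 0` index type, by reindexing along
`ULift`. -/
theorem stmt9_trace_transfer.{u} {H : Type*} [NormedAddCommGroup H] [InnerProductSpace ℂ H]
    [CompleteSpace H] (T : H →L[ℂ] H)
    (htr : ∀ {ι : Type u} (b : HilbertBasis ι ℂ H),
      HasSum (fun i => (⟪b i, T (b i)⟫).re) 1)
    {ι₀ : Type} (b : HilbertBasis ι₀ ℂ H) :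
    HasSum (fun i => (⟪b i, T (b i)⟫).re) 1 := by
  let e : ULift.{u} ι₀ ≃ ι₀ := Equiv.ulift
  have hv : Orthonormal ℂ (⇑b ∘ e) := b.orthonormal.comp e e.injective
  have hrange : Set.range (⇑b ∘ e) = Set.range ⇑b := by
    ext x
    constructor
    · rintro ⟨j, rfl⟩; exact ⟨e j, rfl⟩
    · rintro ⟨i, rfl⟩; exact ⟨e.symm i, by simp⟩
  have hsp : ⊤ ≤ (Submodule.span ℂ (Set.range (⇑b ∘ e))).topologicalClosure := by
    rw [hrange, b.dense_span]
  have hb' := htr (HilbertBasis.mk hv hsp)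
  have hfe : (fun i : ULift.{u} ι₀ =>
      (⟪(HilbertBasis.mk hv hsp) i, T ((HilbertBasis.mk hv hsp) i)⟫).re)
      = ((fun i => (⟪b i, T (b i)⟫).re) ∘ ⇑e) := by
    funext i
    have hcoe : (HilbertBasis.mk hv hsp) i = b (e i) :=
      congrFun (HilbertBasis.coe_mk hv hsp) i
    simp only [Function.comp_apply, hcoe]
  rw [hfe] at hb'
  exact (Equiv.hasSum_iff e).mp hb'

set_option maxHeartbeats 2000000 in
set_option synthInstance.maxHeartbeats 400000 in
/-- Let `G` be a connected, locally compact, second countable, unimodular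
topological group with Haar measure `λ`, and `U : G → U(H)` a strongly continuous square
integrable projective unitary representation. Let `T` be a positive trace-one operator and
`E^T` the covariant observable defined weakly by
`⟨ψ, E^T(B)φ⟩ = d⁻¹ ∫_B ⟨ψ, U(g)TU(g)*φ⟩ dλ(g)`. Then the only projections in the range of
`E^T` are `O` and `I`. -/
theorem stmt9 {G : Type*} [Group G] [TopologicalSpace G] [IsTopologicalGroup G]
    [LocallyCompactSpace G] [SecondCountableTopology G] [ConnectedSpace G]
    [MeasurableSpace G] [BorelSpace G]
    (lam : Measure G) [lam.IsHaarMeasure] [lam.IsMulRightInvariant]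
    {H : Type*} [NormedAddCommGroup H] [InnerProductSpace ℂ H] [CompleteSpace H]
    (U : G → H →L[ℂ] H)
    (hUiso : ∀ (g : G) (φ : H), ‖U g φ‖ = ‖φ‖)
    (hUsurj : ∀ g : G, Function.Surjective (U g))
    (c : G → G → ℂ) (hc : ∀ g h : G, ‖c g h‖ = 1)
    (hproj : ∀ g h : G, (U g).comp (U h) = c g h • U (g * h))
    (hUcont : ∀ φ : H, Continuous fun g => U g φ)
    (d : ℝ) (hd : 0 < d)
    (hsq : ∀ ψ φ : H, ‖ψ‖ = 1 → ‖φ‖ = 1 → ∫ g, ‖⟪ψ, U g φ⟫‖ ^ 2 ∂lam = d)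
    (T : H →L[ℂ] H) (hT : T.IsPositive)
    (htr : ∀ {ι : Type*} (b : HilbertBasis ι ℂ H),
      HasSum (fun i => (⟪b i, T (b i)⟫).re) 1)
    (ET : Set G → H →L[ℂ] H)
    (hET : ∀ B : Set G, MeasurableSet B → ∀ ψ φ : H,
      ⟪ψ, ET B φ⟫ =
        d⁻¹ * ∫ g in B, ⟪ψ, U g (T ((ContinuousLinearMap.adjoint (U g)) φ))⟫ ∂lam) :
    ∀ B : Set G, MeasurableSet B →
      (IsSelfAdjoint (ET B) ∧ (ET B).comp (ET B) = ET B) →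
      ET B = 0 ∨ ET B = 1 := by
  classical
  intro B hB hP
  obtain ⟨hPsa, hPidem⟩ := hP
  set P : H →L[ℂ] H := ET B with hPdef
  have hPapply : ∀ x, P (P x) = P x := fun x => by
    rw [← ContinuousLinearMap.comp_apply, hPidem]
  -- trivial case of a zero space
  by_cases htriv : ∀ x : H, x = 0
  · exact Or.inl (ContinuousLinearMap.ext fun x => (htriv _).trans (htriv _).symm)
  push_neg at htriv
  obtain ⟨x₀, hx₀⟩ := htriv
  -- basic facts about the unitaries
  have hUinner : ∀ (g : G) (x y : H), ⟪U g x, U g y⟫ = ⟪x, y⟫ := fun g x y =>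
    LinearIsometry.inner_map_map ⟨(U g).toLinearMap, hUiso g⟩ x y
  have hadj1 : ∀ (g : G) (x : H), ContinuousLinearMap.adjoint (U g) (U g x) = x := by
    intro g x
    apply ext_inner_left ℂ
    intro v
    rw [ContinuousLinearMap.adjoint_inner_right]
    exact hUinner g v x
  have hadj2 : ∀ (g : G) (z : H), U g (ContinuousLinearMap.adjoint (U g) z) = z := by
    intro g z
    obtain ⟨x, rfl⟩ := hUsurj g z
    rw [hadj1]
  -- the square root of T
  have hT0 : (0 : H →L[ℂ] H) ≤ T := (ContinuousLinearMap.nonneg_iff_isPositive T).mpr hT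
  set S : H →L[ℂ] H := CFC.sqrt T with hSdef
  have hS0 : (0 : H →L[ℂ] H) ≤ S := CFC.sqrt_nonneg (a := T)
  have hSsa : IsSelfAdjoint S := IsSelfAdjoint.of_nonneg hS0
  have hSym : ∀ u v : H, ⟪S u, v⟫ = ⟪u, S v⟫ := fun u v => hSsa.isSymmetric u v
  have hSS : ∀ x, S (S x) = T x := by
    intro x
    have h2 : S * S = T := by
      have := CFC.sq_sqrt T hT0
      rwa [sq] at this
    calc S (S x) = (S * S) x := rfl
      _ = T x := by rw [h2]
  have hinself : ∀ v : H, ⟪v, v⟫ = ((‖v‖ ^ 2 : ℝ) : ℂ) := fun v => by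
    exact_mod_cast inner_self_eq_norm_sq_to_K (𝕜 := ℂ) v
  have hnorm0 : ∀ v : H, ‖v‖ ^ 2 = 0 → v = 0 := fun v hv => by
    have : ‖v‖ = 0 := by nlinarith [norm_nonneg v]
    exact norm_eq_zero.mp this
  -- the density function
  set F : H → G → ℝ := fun x g => ‖S (ContinuousLinearMap.adjoint (U g) x)‖ ^ 2 with hFdef
  have hF0 : ∀ x g, 0 ≤ F x g := fun x g => sq_nonneg _
  have hFinner : ∀ (x : H) (g : G),
      ⟪x, U g (T (ContinuousLinearMap.adjoint (U g) x))⟫ = ((F x g : ℝ) : ℂ) := by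
    intro x g
    set y := ContinuousLinearMap.adjoint (U g) x with hy
    simp only [hFdef]
    rw [← ContinuousLinearMap.adjoint_inner_left, ← hy, ← hSS, ← hSym y (S y)]
    exact hinself (S y)
  -- continuity of the density
  have hFeq : ∀ (x : H) (g : G),
      F x g = ‖S (U g⁻¹ (ContinuousLinearMap.adjoint (U 1) x))‖ ^ 2 := by
    intro x g
    set y := ContinuousLinearMap.adjoint (U 1) x with hy
    have h1 : U 1 y = x := hadj2 1 x
    have h2 : U g (U g⁻¹ y) = c g g⁻¹ • x := by
      have := congrArg (fun (A : H →L[ℂ] H) => A y) (hproj g g⁻¹)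
      simpa [h1] using this
    have h3 : U g⁻¹ y = c g g⁻¹ • ContinuousLinearMap.adjoint (U g) x := by
      have h4 := congrArg (ContinuousLinearMap.adjoint (U g)) h2
      rwa [hadj1, _root_.map_smul] at h4
    simp only [hFdef]
    rw [h3, _root_.map_smul, norm_smul, hc, one_mul]
  have hFcont : ∀ x : H, Continuous (F x) := by
    intro x
    have hcf : Continuous fun g : G =>
        ‖S (U g⁻¹ (ContinuousLinearMap.adjoint (U 1) x))‖ ^ 2 :=
      ((S.continuous.comp ((hUcont _).comp continuous_inv)).norm).pow 2
    have heq : F x = fun g => ‖S (U g⁻¹ (ContinuousLinearMap.adjoint (U 1) x))‖ ^ 2 :=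
      funext (hFeq x)
    rw [heq]
    exact hcf
  -- square integrability, scaled version, in ℝ≥0∞
  have hsq2 : ∀ (ψ x : H), ∫⁻ g, ENNReal.ofReal (‖⟪ψ, U g x⟫‖ ^ 2) ∂lam
      = ENNReal.ofReal (d * (‖ψ‖ ^ 2 * ‖x‖ ^ 2)) := by
    intro ψ x
    rcases eq_or_ne ψ 0 with rfl | hψ
    · simp
    rcases eq_or_ne x 0 with rfl | hx
    · simp
    have ha : (0:ℝ) < ‖ψ‖ := norm_pos_iff.mpr hψ
    have he : (0:ℝ) < ‖x‖ := norm_pos_iff.mpr hx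
    set ψ' := ((‖ψ‖⁻¹ : ℝ) : ℂ) • ψ with hψ'def
    set x' := ((‖x‖⁻¹ : ℝ) : ℂ) • x with hx'def
    have hψ'1 : ‖ψ'‖ = 1 := by
      rw [hψ'def, norm_smul, Complex.norm_real, Real.norm_eq_abs,
        abs_of_pos (inv_pos.mpr ha), inv_mul_cancel₀ ha.ne']
    have hx'1 : ‖x'‖ = 1 := by
      rw [hx'def, norm_smul, Complex.norm_real, Real.norm_eq_abs,
        abs_of_pos (inv_pos.mpr he), inv_mul_cancel₀ he.ne']
    have hsqv := hsq ψ' x' hψ'1 hx'1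
    have hpt : ∀ g, ‖⟪ψ, U g x⟫‖ ^ 2 = (‖ψ‖ ^ 2 * ‖x‖ ^ 2) * ‖⟪ψ', U g x'⟫‖ ^ 2 := by
      intro g
      have h1 : ⟪ψ', U g x'⟫ = ((‖ψ‖⁻¹ : ℝ) : ℂ) * (((‖x‖⁻¹ : ℝ) : ℂ) * ⟪ψ, U g x⟫) := by
        rw [hψ'def, hx'def, _root_.map_smul, inner_smul_left, inner_smul_right,
          Complex.conj_ofReal]
      have h2 : ‖⟪ψ', U g x'⟫‖ = ‖ψ‖⁻¹ * (‖x‖⁻¹ * ‖⟪ψ, U g x⟫‖) := by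
        rw [h1, norm_mul, norm_mul, Complex.norm_real, Complex.norm_real,
          Real.norm_eq_abs, Real.norm_eq_abs, abs_of_pos (inv_pos.mpr ha),
          abs_of_pos (inv_pos.mpr he)]
      rw [h2]
      field_simp
    have hint : Integrable (fun g => ‖⟪ψ', U g x'⟫‖ ^ 2) lam := by
      by_contra hni
      rw [integral_undef hni] at hsqv
      linarith
    have hL : ∫⁻ g, ENNReal.ofReal (‖⟪ψ', U g x'⟫‖ ^ 2) ∂lam = ENNReal.ofReal d := by
      rw [← ofReal_integral_eq_lintegral_ofReal hint (ae_of_all _ fun g => sq_nonneg _), hsqv]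
    calc ∫⁻ g, ENNReal.ofReal (‖⟪ψ, U g x⟫‖ ^ 2) ∂lam
        = ∫⁻ g, ENNReal.ofReal (‖ψ‖ ^ 2 * ‖x‖ ^ 2) * ENNReal.ofReal (‖⟪ψ', U g x'⟫‖ ^ 2) ∂lam := by
          refine lintegral_congr fun g => ?_
          rw [hpt g, ENNReal.ofReal_mul (by positivity)]
      _ = ENNReal.ofReal (‖ψ‖ ^ 2 * ‖x‖ ^ 2) * ENNReal.ofReal d := by
          rw [lintegral_const_mul' _ _ ENNReal.ofReal_ne_top, hL]
      _ = ENNReal.ofReal (d * (‖ψ‖ ^ 2 * ‖x‖ ^ 2)) := by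
          rw [← ENNReal.ofReal_mul (by positivity), mul_comm]
  -- separability of H
  have hx₀n : (0:ℝ) < ‖x₀‖ := norm_pos_iff.mpr hx₀
  set φ₀ : H := ((‖x₀‖⁻¹ : ℝ) : ℂ) • x₀ with hφ₀def
  have hφ₀1 : ‖φ₀‖ = 1 := by
    rw [hφ₀def, norm_smul, Complex.norm_real, Real.norm_eq_abs,
      abs_of_pos (inv_pos.mpr hx₀n), inv_mul_cancel₀ hx₀n.ne']
  have hperp : (Submodule.span ℂ (Set.range fun g => U g φ₀))ᗮ = ⊥ := by
    rw [Submodule.eq_bot_iff]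
    intro ψ hψmem
    by_contra hψne
    have hψn : (0:ℝ) < ‖ψ‖ := norm_pos_iff.mpr hψne
    set ψ' : H := ((‖ψ‖⁻¹ : ℝ) : ℂ) • ψ with hψ'def
    have hψ'1 : ‖ψ'‖ = 1 := by
      rw [hψ'def, norm_smul, Complex.norm_real, Real.norm_eq_abs,
        abs_of_pos (inv_pos.mpr hψn), inv_mul_cancel₀ hψn.ne']
    have horth : ∀ g : G, ⟪ψ', U g φ₀⟫ = 0 := by
      intro g
      have hmem : U g φ₀ ∈ Submodule.span ℂ (Set.range fun g => U g φ₀) :=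
        Submodule.subset_span ⟨g, rfl⟩
      have h0 : ⟪U g φ₀, ψ⟫ = 0 := (Submodule.mem_orthogonal _ ψ).mp hψmem _ hmem
      have h0' : ⟪ψ, U g φ₀⟫ = 0 := by
        rw [← inner_conj_symm (𝕜 := ℂ) ψ (U g φ₀), h0, map_zero]
      rw [hψ'def, inner_smul_left, h0', mul_zero]
    have hzero := hsq ψ' φ₀ hψ'1 hφ₀1
    have hz : (fun g : G => ‖⟪ψ', U g φ₀⟫‖ ^ 2) = fun _ => (0:ℝ) := by
      funext g; rw [horth g]; simp
    rw [hz, integral_zero] at hzero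
    linarith
  have hsepH : TopologicalSpace.SeparableSpace H := by
    have h1 : TopologicalSpace.IsSeparable (Set.range fun g => U g φ₀) :=
      TopologicalSpace.isSeparable_range (hUcont φ₀)
    have h2 := (h1.span (R := ℂ)).closure
    have htop : (Submodule.span ℂ (Set.range fun g => U g φ₀)).topologicalClosure = ⊤ :=
      Submodule.topologicalClosure_eq_top_iff.mpr hperp
    have hcl : closure (↑(Submodule.span ℂ (Set.range fun g => U g φ₀)) : Set H)
        = Set.univ := by
      have h3 := congrArg (SetLike.coe (A := Submodule ℂ H)) htop
      rwa [Submodule.topologicalClosure_coe, Submodule.top_coe] at h3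
    rw [hcl] at h2
    rwa [TopologicalSpace.isSeparable_univ_iff] at h2
  -- a Hilbert basis, countable by separability
  obtain ⟨w, b, hbcoe⟩ := exists_hilbertBasis ℂ H
  have horthw : Orthonormal ℂ (Subtype.val : w → H) := by
    rw [← hbcoe]; exact b.orthonormal
  have hwdist : ∀ i j : w, i ≠ j → (1:ℝ) < dist (i : H) (j : H) := by
    intro i j hij
    have hn1 : ‖(i:H)‖ = 1 := horthw.1 i
    have hn2 : ‖(j:H)‖ = 1 := horthw.1 j
    have ho : ⟪(i:H), (j:H)⟫ = 0 := horthw.2 hij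
    have hds : dist (i:H) (j:H) ^ 2 = 2 := by
      rw [dist_eq_norm, @norm_sub_sq ℂ, hn1, hn2, ho]
      norm_num [map_zero]
    nlinarith [dist_nonneg (x := (i:H)) (y := (j:H))]
  obtain ⟨t, htc, htd⟩ := TopologicalSpace.exists_countable_dense H
  have hchoice : ∀ i : w, ∃ y, y ∈ t ∧ dist (i : H) y < 1/2 := fun i => by
    obtain ⟨y, hy, hy2⟩ := htd.exists_dist_lt (i : H) (by norm_num : (0:ℝ) < 1/2)
    exact ⟨y, hy, hy2⟩
  choose f hf1 hf2 using hchoice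
  have hfinj : Function.Injective f := by
    intro i j hij
    by_contra hne
    have h1 := hwdist i j hne
    have htri := dist_triangle (i : H) (f i) (j : H)
    have h2 : dist (f i) (j : H) = dist (j : H) (f j) := by rw [hij, dist_comm]
    rw [h2] at htri
    linarith [hf2 i, hf2 j]
  haveI : Countable t := htc.to_subtype
  haveI hwc : Countable w :=
    Function.Injective.countable (f := fun i : w => (⟨f i, hf1 i⟩ : t))
      (fun i j h => hfinj (congrArg Subtype.val h))
  obtain ⟨fN, hfN⟩ := Countable.exists_injective_nat w
  set e0 : w ≃ Set.range fN := Equiv.ofInjective fN hfN with he0def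
  set v0 : Set.range fN → H := fun n => ((e0.symm n : w) : H) with hv0def
  have hv0 : Orthonormal ℂ v0 := horthw.comp e0.symm e0.symm.injective
  have hr0 : Set.range v0 = Set.range ⇑b := by
    rw [hbcoe]
    ext x
    constructor
    · rintro ⟨n, rfl⟩; exact ⟨e0.symm n, rfl⟩
    · rintro ⟨i, rfl⟩; exact ⟨e0 i, by simp [hv0def]⟩
  have hsp0 : ⊤ ≤ (Submodule.span ℂ (Set.range v0)).topologicalClosure := by
    rw [hr0, b.dense_span]
  set b0 : HilbertBasis (Set.range fN) ℂ H := HilbertBasis.mk hv0 hsp0 with hb0def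
  have htrb : HasSum (fun i => (⟪b0 i, T (b0 i)⟫).re) 1 := stmt9_trace_transfer T @htr b0
  have hterm : ∀ y : H, (⟪y, T y⟫).re = ‖S y‖ ^ 2 := by
    intro y
    rw [← hSS y, ← hSym y (S y), hinself (S y)]
    norm_cast
  have hSb : HasSum (fun i => ‖S (b0 i)‖ ^ 2) 1 := by
    simpa only [hterm] using htrb
  have hSbsum : Summable (fun i => ‖S (b0 i)‖ ^ 2) := hSb.summable
  -- Lemma A : the total mass of the density
  have lemA : ∀ x : H, ∫⁻ g, ENNReal.ofReal (F x g) ∂lam = ENNReal.ofReal (d * ‖x‖ ^ 2) := by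
    intro x
    have hpt : ∀ g : G, ENNReal.ofReal (F x g) =
        ∑' i, ENNReal.ofReal (‖⟪x, U g (S (b0 i))⟫‖ ^ 2) := by
      intro g
      set z := S (ContinuousLinearMap.adjoint (U g) x) with hz
      have h1 : HasSum (fun i => ⟪z, b0 i⟫ * ⟪b0 i, z⟫) ⟪z, z⟫ :=
        b0.hasSum_inner_mul_inner z z
      have hterm2 : ∀ i,
          ⟪z, b0 i⟫ * ⟪b0 i, z⟫ = ((‖⟪x, U g (S (b0 i))⟫‖ ^ 2 : ℝ) : ℂ) := by
        intro i
        have e1 : ⟪b0 i, z⟫ = ⟪U g (S (b0 i)), x⟫ := by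
          rw [hz, ← hSym (b0 i) _, ContinuousLinearMap.adjoint_inner_right]
        calc ⟪z, b0 i⟫ * ⟪b0 i, z⟫ = ((‖⟪b0 i, z⟫‖ ^ 2 : ℝ) : ℂ) := by
              rw [← inner_conj_symm (𝕜 := ℂ) z (b0 i), mul_comm, Complex.mul_conj,
                Complex.normSq_eq_norm_sq]
          _ = _ := by rw [e1, norm_inner_symm]
      rw [funext hterm2, hinself z] at h1
      have h2 : HasSum (fun i => ‖⟪x, U g (S (b0 i))⟫‖ ^ 2) (‖z‖ ^ 2) := by
        simpa only [Complex.reCLM_apply, ← Complex.ofReal_pow, Complex.ofReal_re]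
          using Complex.reCLM.hasSum h1
      have h3 : ENNReal.ofReal (‖z‖ ^ 2)
          = ∑' i, ENNReal.ofReal (‖⟪x, U g (S (b0 i))⟫‖ ^ 2) := by
        rw [← h2.tsum_eq]
        exact ENNReal.ofReal_tsum_of_nonneg (fun i => sq_nonneg _) h2.summable
      simp only [hFdef]
      rw [← hz, h3]
    calc ∫⁻ g, ENNReal.ofReal (F x g) ∂lam
        = ∫⁻ g, ∑' i, ENNReal.ofReal (‖⟪x, U g (S (b0 i))⟫‖ ^ 2) ∂lam :=
          lintegral_congr hpt
      _ = ∑' i, ∫⁻ g, ENNReal.ofReal (‖⟪x, U g (S (b0 i))⟫‖ ^ 2) ∂lam := by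
          refine lintegral_tsum fun i => ?_
          have hcont : Continuous fun g : G => ‖⟪x, U g (S (b0 i))⟫‖ ^ 2 :=
            ((continuous_const.inner (hUcont (S (b0 i)))).norm).pow 2
          exact (ENNReal.continuous_ofReal.comp hcont).aemeasurable
      _ = ∑' i, ENNReal.ofReal (d * (‖x‖ ^ 2 * ‖S (b0 i)‖ ^ 2)) :=
          tsum_congr fun i => hsq2 x (S (b0 i))
      _ = ENNReal.ofReal (d * ‖x‖ ^ 2) := by
          have e1 : ∀ i, ENNReal.ofReal (d * (‖x‖ ^ 2 * ‖S (b0 i)‖ ^ 2))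
              = ENNReal.ofReal (d * ‖x‖ ^ 2) * ENNReal.ofReal (‖S (b0 i)‖ ^ 2) := by
            intro i
            rw [← mul_assoc, ENNReal.ofReal_mul (by positivity)]
          rw [tsum_congr e1, ENNReal.tsum_mul_left,
            ← ENNReal.ofReal_tsum_of_nonneg (fun i => sq_nonneg _) hSbsum, hSb.tsum_eq]
          simp
  -- integrability of the density
  have hFint : ∀ x : H, Integrable (F x) lam := by
    intro x
    refine ⟨(hFcont x).aestronglyMeasurable, ?_⟩
    have heq : ∫⁻ g, ‖F x g‖ₑ ∂lam = ENNReal.ofReal (d * ‖x‖ ^ 2) := by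
      rw [← lemA x]
      exact lintegral_congr fun g => Real.enorm_eq_ofReal (hF0 x g)
    show (∫⁻ g, ‖F x g‖ₑ ∂lam) < ⊤
    rw [heq]
    exact ENNReal.ofReal_lt_top
  -- diagonal matrix elements of P
  have hPinner : ∀ x : H, ⟪x, P x⟫ = ((d⁻¹ * ∫ g in B, F x g ∂lam : ℝ) : ℂ) := by
    intro x
    rw [hPdef, hET B hB x x]
    simp only [hFinner]
    rw [show (∫ g in B, ((F x g : ℝ) : ℂ) ∂lam) = ((∫ g in B, F x g ∂lam : ℝ) : ℂ)
      from integral_ofReal]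
    norm_cast
  -- for vectors fixed by P, the density has full mass on B
  have hBint : ∀ ψ : H, P ψ = ψ →
      ∫⁻ g in B, ENNReal.ofReal (F ψ g) ∂lam = ENNReal.ofReal (d * ‖ψ‖ ^ 2) := by
    intro ψ hψ
    have h1 : ⟪ψ, P ψ⟫ = ((‖ψ‖ ^ 2 : ℝ) : ℂ) := by rw [hψ]; exact hinself ψ
    have h2 : d⁻¹ * ∫ g in B, F ψ g ∂lam = ‖ψ‖ ^ 2 := by
      have := (hPinner ψ).symm.trans h1
      exact_mod_cast this
    have h3 : ∫ g in B, F ψ g ∂lam = d * ‖ψ‖ ^ 2 := by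
      rw [← h2, ← mul_assoc, mul_inv_cancel₀ hd.ne', one_mul]
    rw [← h3]
    exact (ofReal_integral_eq_lintegral_ofReal ((hFint ψ).restrict)
      (ae_of_all _ fun g => hF0 ψ g)).symm
  -- for vectors fixed by P, the density vanishes a.e. off B
  have hcompl : ∀ ψ : H, P ψ = ψ → lam ({g | F ψ g ≠ 0} ∩ Bᶜ) = 0 := by
    intro ψ hψ
    have hsplit := lintegral_add_compl (fun g => ENNReal.ofReal (F ψ g)) hB (μ := lam)
    have hfin : ∫⁻ g in B, ENNReal.ofReal (F ψ g) ∂lam ≠ ⊤ := by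
      rw [hBint ψ hψ]; exact ENNReal.ofReal_ne_top
    have hzero : ∫⁻ g in Bᶜ, ENNReal.ofReal (F ψ g) ∂lam = 0 := by
      have heq : ∫⁻ g in B, ENNReal.ofReal (F ψ g) ∂lam
          + ∫⁻ g in Bᶜ, ENNReal.ofReal (F ψ g) ∂lam
          = ∫⁻ g in B, ENNReal.ofReal (F ψ g) ∂lam + 0 := by
        rw [add_zero, hsplit, lemA, hBint ψ hψ]
      exact (ENNReal.add_right_inj hfin).mp heq
    have hae : (fun g => ENNReal.ofReal (F ψ g)) =ᵐ[lam.restrict Bᶜ] 0 :=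
      (lintegral_eq_zero_iff'
        ((ENNReal.continuous_ofReal.comp (hFcont ψ)).aemeasurable)).mp hzero
    have hae2 : ∀ᵐ g ∂lam, g ∈ Bᶜ → F ψ g = 0 := by
      rw [← ae_restrict_iff' hB.compl]
      filter_upwards [hae] with g hg
      have h0 : ENNReal.ofReal (F ψ g) = 0 := hg
      exact le_antisymm (ENNReal.ofReal_eq_zero.mp h0) (hF0 ψ g)
    have hsub : {g | F ψ g ≠ 0} ∩ Bᶜ ⊆ {g | ¬(g ∈ Bᶜ → F ψ g = 0)} := by
      intro g hg
      simp only [Set.mem_setOf_eq]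
      intro h
      exact hg.1 (h hg.2)
    exact measure_mono_null hsub (ae_iff.mp hae2)
  -- for vectors killed by P, the density vanishes a.e. on B
  have hBnull : ∀ φ : H, P φ = 0 → lam ({g | F φ g ≠ 0} ∩ B) = 0 := by
    intro φ hφ
    have h1 : ⟪φ, P φ⟫ = 0 := by rw [hφ]; simp
    have h2 : d⁻¹ * ∫ g in B, F φ g ∂lam = 0 := by
      have := (hPinner φ).symm.trans h1
      exact_mod_cast this
    have h3 : ∫ g in B, F φ g ∂lam = 0 :=
      (mul_eq_zero.mp h2).resolve_left (inv_ne_zero hd.ne')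
    have hzero : ∫⁻ g in B, ENNReal.ofReal (F φ g) ∂lam = 0 := by
      rw [← ofReal_integral_eq_lintegral_ofReal ((hFint φ).restrict)
        (ae_of_all _ fun g => hF0 φ g), h3]
      simp
    have hae : (fun g => ENNReal.ofReal (F φ g)) =ᵐ[lam.restrict B] 0 :=
      (lintegral_eq_zero_iff'
        ((ENNReal.continuous_ofReal.comp (hFcont φ)).aemeasurable)).mp hzero
    have hae2 : ∀ᵐ g ∂lam, g ∈ B → F φ g = 0 := by
      rw [← ae_restrict_iff' hB]
      filter_upwards [hae] with g hg
      have h0 : ENNReal.ofReal (F φ g) = 0 := hg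
      exact le_antisymm (ENNReal.ofReal_eq_zero.mp h0) (hF0 φ g)
    have hsub : {g | F φ g ≠ 0} ∩ B ⊆ {g | ¬(g ∈ B → F φ g = 0)} := by
      intro g hg
      simp only [Set.mem_setOf_eq]
      intro h
      exact hg.1 (h hg.2)
    exact measure_mono_null hsub (ae_iff.mp hae2)
  -- disjointness of supports
  have hdisj : ∀ ψ φ : H, P ψ = ψ → P φ = 0 → ∀ g : G, F ψ g = 0 ∨ F φ g = 0 := by
    intro ψ φ hψ hφ g
    by_contra hcon
    push_neg at hcon
    obtain ⟨h1, h2⟩ := hcon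
    have hOopen : IsOpen ({g : G | F ψ g ≠ 0} ∩ {g : G | F φ g ≠ 0}) :=
      (isOpen_ne.preimage (hFcont ψ)).inter (isOpen_ne.preimage (hFcont φ))
    have hsub : {g : G | F ψ g ≠ 0} ∩ {g : G | F φ g ≠ 0}
        ⊆ ({g | F ψ g ≠ 0} ∩ Bᶜ) ∪ ({g | F φ g ≠ 0} ∩ B) := by
      intro g hg
      by_cases hgB : g ∈ B
      · exact Or.inr ⟨hg.2, hgB⟩
      · exact Or.inl ⟨hg.1, hgB⟩
    have hOnull : lam ({g : G | F ψ g ≠ 0} ∩ {g : G | F φ g ≠ 0}) = 0 :=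
      measure_mono_null hsub (measure_union_null (hcompl ψ hψ) (hBnull φ hφ))
    have hpos : (0:ℝ≥0∞) < lam ({g : G | F ψ g ≠ 0} ∩ {g : G | F φ g ≠ 0}) :=
      hOopen.measure_pos lam ⟨g, h1, h2⟩
    exact hpos.ne' hOnull
  -- vanishing density forces the zero vector
  have hxzero : ∀ x : H, (∀ g, F x g = 0) → x = 0 := by
    intro x hx
    have hA := lemA x
    rw [lintegral_congr (fun g => by rw [hx g, ENNReal.ofReal_zero]), lintegral_zero] at hA
    have h0 : d * ‖x‖ ^ 2 ≤ 0 := ENNReal.ofReal_eq_zero.mp hA.symm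
    have h1 : ‖x‖ ^ 2 = 0 := by nlinarith [sq_nonneg ‖x‖]
    exact hnorm0 x h1
  -- the two open sets
  set V : Set G := ⋃ ψ : {ψ : H // P ψ = ψ}, {g | F ψ.1 g ≠ 0} with hV
  set W : Set G := ⋃ φ : {φ : H // P φ = 0}, {g | F φ.1 g ≠ 0} with hW
  have hVopen : IsOpen V := isOpen_iUnion fun ψ => isOpen_ne.preimage (hFcont ψ.1)
  have hWopen : IsOpen W := isOpen_iUnion fun φ => isOpen_ne.preimage (hFcont φ.1)
  have hcover : ∀ g : G, g ∈ V ∪ W := by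
    intro g
    by_contra hg
    rw [Set.mem_union] at hg
    push_neg at hg
    obtain ⟨hgV, hgW⟩ := hg
    have hall : ∀ x : H, S (ContinuousLinearMap.adjoint (U g) x) = 0 := by
      intro x
      have hx1 : F (P x) g = 0 := by
        by_contra hne
        exact hgV (Set.mem_iUnion.mpr ⟨⟨P x, hPapply x⟩, hne⟩)
      have hx2 : F (x - P x) g = 0 := by
        by_contra hne
        refine hgW (Set.mem_iUnion.mpr ⟨⟨x - P x, ?_⟩, hne⟩)
        rw [_root_.map_sub, hPapply, sub_self]
      simp only [hFdef] at hx1 hx2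
      have e1 := hnorm0 _ hx1
      have e2 := hnorm0 _ hx2
      have e3 : ContinuousLinearMap.adjoint (U g) x
          = ContinuousLinearMap.adjoint (U g) (P x)
            + ContinuousLinearMap.adjoint (U g) (x - P x) := by
        rw [← _root_.map_add]
        congr 1
        abel
      rw [e3, _root_.map_add, e1, e2, add_zero]
    have hSall : ∀ y : H, S y = 0 := by
      intro y
      have := hall (U g y)
      rwa [hadj1] at this
    have hT0' : ∀ i, ‖S (b0 i)‖ ^ 2 = 0 := fun i => by rw [hSall]; simp
    have hcontra : (1:ℝ) = 0 := by
      have h0 : HasSum (fun i => ‖S (b0 i)‖ ^ 2) (0:ℝ) := by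
        simp only [hT0']
        exact hasSum_zero
      exact hSb.unique h0
    norm_num at hcontra
  have hdisjVW : V ∩ W = ∅ := by
    ext g
    simp only [Set.mem_inter_iff, Set.mem_empty_iff_false, iff_false]
    rintro ⟨hgV, hgW⟩
    obtain ⟨ψ, hψg⟩ := Set.mem_iUnion.mp hgV
    obtain ⟨φ, hφg⟩ := Set.mem_iUnion.mp hgW
    rcases hdisj ψ.1 φ.1 ψ.2 φ.2 g with h | h
    exacts [hψg h, hφg h]
  have hVW : V = ∅ ∨ W = ∅ := by
    by_contra hcon
    push_neg at hcon
    obtain ⟨hVne, hWne⟩ := hcon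
    have h1 : (Set.univ ∩ (V ∩ W)).Nonempty :=
      isPreconnected_univ V W hVopen hWopen (fun g _ => hcover g)
        (by rw [Set.univ_inter]; exact hVne)
        (by rw [Set.univ_inter]; exact hWne)
    rw [Set.univ_inter, hdisjVW] at h1
    exact Set.not_nonempty_empty h1
  rcases hVW with hVe | hWe
  · left
    apply ContinuousLinearMap.ext
    intro x
    have hFz : ∀ g, F (P x) g = 0 := by
      intro g
      by_contra hne
      have hmem : g ∈ V := Set.mem_iUnion.mpr ⟨⟨P x, hPapply x⟩, hne⟩
      rw [hVe] at hmem
      exact hmem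
    have h0 := hxzero _ hFz
    simpa using h0
  · right
    apply ContinuousLinearMap.ext
    intro x
    have hFz : ∀ g, F (x - P x) g = 0 := by
      intro g
      by_contra hne
      have hmem : g ∈ W := Set.mem_iUnion.mpr
        ⟨⟨x - P x, by rw [_root_.map_sub, hPapply, sub_self]⟩, hne⟩
      rw [hWe] at hmem
      exact hmem
    have h0 := hxzero _ hFz
    have hx : P x = x := (sub_eq_zero.mp h0).symm
    simpa using hx
end
end

section
/- Let G be a connected, locally compact, second countable, unimodular topological group with Haar measure λ, U : G → U(H) a strongly continuous square integrable projective unitary representation (∫_G |⟨ψ, U(g)φ⟩|² dλ(g) = d > 0 for all unit vectors ψ, φ), and E : ℬ(G) → L(H) a covariant observable, i.e., U(g)*E(B)U(g) = E(g⁻¹B) for all g ∈ G, B ∈ ℬ(G). Suppose f : G → ℂ is measurable and D²(f,E) ⊆ D²(f(g·),E) for all g ∈ G, where f(g·) denotes the function h ↦ f(gh). Then U(g)D²(f,E) = D²(f,E) for all g ∈ G, and D²(f,E) is either {0} or a dense subspace of H. -/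
/-!
Each `E(B)` is positive, so `E_{φ,φ}` is a positive measure, its total variation is
`B ↦ ⟨φ, E(B)φ⟩`, and it satisfies `E_{aφ,aφ} = |a|² E_{φ,φ}` and
`E_{φ+ψ,φ+ψ} ≤ 2 (E_{φ,φ} + E_{ψ,ψ})`; hence `D²(f,E)` is a subspace. Covariance says that
`E_{U(g)φ,U(g)φ}` is the image of `E_{φ,φ}` under `h ↦ gh`, so the hypothesis on `f` makes
`D²(f,E)` invariant under every `U(g)`, and since `U(g)U(g⁻¹)` is a nonzero scalar, `U(g)` maps
it onto itself. Finally, a unit vector `ψ` orthogonal to an invariant subspace containing a unit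
vector `φ` gives `⟨ψ, U(g)φ⟩ = 0` for all `g`, contradicting `∫ |⟨ψ, U(g)φ⟩|² = d > 0`.
-/

open MeasureTheory Filter Topology ComplexConjugate
open scoped ENNReal NNReal

noncomputable section

local notation "⟪" x ", " y "⟫" => @inner ℂ _ _ x y

open scoped ComplexOrder

namespace MeasureTheory

theorem SignedMeasure.totalVariation_apply_of_nonneg {α : Type*} [MeasurableSpace α]
    (s : SignedMeasure α) (hs : ∀ B, MeasurableSet B → 0 ≤ s B) {B : Set α}
    (hB : MeasurableSet B) : s.totalVariation B = ENNReal.ofReal (s B) := by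
  have hle : (0 : VectorMeasure α ℝ) ≤[Set.univ] s :=
    (VectorMeasure.restrict_le_restrict_iff _ _ MeasurableSet.univ).2 fun j hj _ => by
      simpa using hs j hj
  set μ := s.toMeasureOfZeroLE Set.univ MeasurableSet.univ hle
  have hμ : ∀ E, MeasurableSet E → μ E = ENNReal.ofReal (s E) := fun E hE => by
    rw [SignedMeasure.toMeasureOfZeroLE_apply _ _ _ hE, ENNReal.ofReal_eq_coe_nnreal (hs E hE)]
    simp only [Set.univ_inter]
  refine le_antisymm ?_ ?_
  · rw [SignedMeasure.totalVariation_eq_variation, ← hμ B hB]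
    refine VectorMeasure.variation_le_of_forall_enorm_le (fun E hE => ?_) B
    rw [hμ E hE, Real.enorm_of_nonneg (hs E hE)]
  · rw [← Real.enorm_of_nonneg (hs B hB)]
    exact s.enorm_le_totalVariation B

theorem ComplexMeasure.tv_apply_of_nonneg {α : Type*} [MeasurableSpace α]
    (ν : ComplexMeasure α) (hν : ∀ B, MeasurableSet B → 0 ≤ ν B) {B : Set α}
    (hB : MeasurableSet B) : ν.tv B = ENNReal.ofReal (ν B).re := by
  have him : ComplexMeasure.im ν = 0 := by
    ext i hi
    exact (Complex.le_def.1 (hν i hi)).2.symm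
  rw [ComplexMeasure.tv, him, SignedMeasure.totalVariation_zero, Measure.add_apply,
    Measure.coe_zero, Pi.zero_apply, add_zero]
  exact SignedMeasure.totalVariation_apply_of_nonneg _
    (fun i hi => (Complex.le_def.1 (hν i hi)).1) hB

end MeasureTheory

theorem ContinuousLinearMap.IsPositive.re_inner_add_le {H : Type*} [NormedAddCommGroup H]
    [InnerProductSpace ℂ H] {T : H →L[ℂ] H} (hT : T.IsPositive) (φ ψ : H) :
    (⟪φ + ψ, T (φ + ψ)⟫).re ≤ 2 * ((⟪φ, T φ⟫).re + (⟪ψ, T ψ⟫).re) := by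
  have hsub := (Complex.le_def.1 (hT.inner_nonneg_right (φ - ψ))).1
  simp only [map_add, map_sub, inner_add_left, inner_add_right, inner_sub_left,
    inner_sub_right, Complex.add_re, Complex.sub_re, Complex.zero_re] at hsub ⊢
  linarith

section PositiveOperatorMeasure

variable {Ω : Type*} [MeasurableSpace Ω] {H : Type*} [NormedAddCommGroup H]
  [InnerProductSpace ℂ H] {E : Set Ω → H →L[ℂ] H} {ν : H → H → ComplexMeasure Ω}

theorem tv_apply_eq_re_inner (hEpos : ∀ B, MeasurableSet B → (E B).IsPositive)
    (hν : ∀ ψ φ B, MeasurableSet B → ν ψ φ B = ⟪ψ, E B φ⟫) (φ : H) {B : Set Ω}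
    (hB : MeasurableSet B) : (ν φ φ).tv B = ENNReal.ofReal (⟪φ, E B φ⟫).re := by
  refine (hν φ φ B hB ▸ (ν φ φ).tv_apply_of_nonneg (fun i hi => ?_) hB)
  exact hν φ φ i hi ▸ (hEpos i hi).inner_nonneg_right φ

theorem tv_smul_eq (hEpos : ∀ B, MeasurableSet B → (E B).IsPositive)
    (hν : ∀ ψ φ B, MeasurableSet B → ν ψ φ B = ⟪ψ, E B φ⟫) (a : ℂ) (φ : H) :
    (ν (a • φ) (a • φ)).tv = ENNReal.ofReal (‖a‖ ^ 2) • (ν φ φ).tv := by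
  ext B hB
  rw [Measure.smul_apply, tv_apply_eq_re_inner hEpos hν _ hB, tv_apply_eq_re_inner hEpos hν _ hB,
    smul_eq_mul, ← ENNReal.ofReal_mul (by positivity), map_smul, inner_smul_left,
    inner_smul_right, ← mul_assoc, Complex.conj_mul', ← Complex.ofReal_pow,
    Complex.re_ofReal_mul]

theorem tv_add_le (hEpos : ∀ B, MeasurableSet B → (E B).IsPositive)
    (hν : ∀ ψ φ B, MeasurableSet B → ν ψ φ B = ⟪ψ, E B φ⟫) (φ ψ : H) :
    (ν (φ + ψ) (φ + ψ)).tv ≤ (2 : ℝ≥0∞) • ((ν φ φ).tv + (ν ψ ψ).tv) := by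
  refine Measure.le_iff.2 fun B hB => ?_
  have hnonneg : ∀ χ : H, 0 ≤ (⟪χ, E B χ⟫).re := fun χ =>
    (Complex.le_def.1 ((hEpos B hB).inner_nonneg_right χ)).1
  rw [Measure.smul_apply, Measure.add_apply, tv_apply_eq_re_inner hEpos hν _ hB,
    tv_apply_eq_re_inner hEpos hν _ hB, tv_apply_eq_re_inner hEpos hν _ hB, smul_eq_mul,
    ← ENNReal.ofReal_add (hnonneg φ) (hnonneg ψ), ← ENNReal.ofReal_ofNat 2,
    ← ENNReal.ofReal_mul zero_le_two]
  exact ENNReal.ofReal_le_ofReal ((hEpos B hB).re_inner_add_le φ ψ)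

/-- The paper's `D²(f, E)` is `integrabilityDomain hEpos hν (‖f ·‖ ^ 2)`. -/
def integrabilityDomain (hEpos : ∀ B, MeasurableSet B → (E B).IsPositive)
    (hν : ∀ ψ φ B, MeasurableSet B → ν ψ φ B = ⟪ψ, E B φ⟫) (F : Ω → ℝ) : Submodule ℂ H where
  carrier := {φ | Integrable F (ν φ φ).tv}
  zero_mem' := by
    have : (ν 0 0).tv = 0 := by
      simpa using tv_smul_eq hEpos hν 0 (0 : H)
    simp [this]
  add_mem' {φ ψ} hφ hψ :=
    ((hφ.add_measure hψ).smul_measure ENNReal.ofNat_ne_top).mono_measure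
      (tv_add_le hEpos hν φ ψ)
  smul_mem' a φ hφ := by
    simp only [Set.mem_ofPred_eq, tv_smul_eq hEpos hν a φ]
    exact hφ.smul_measure ENNReal.ofReal_ne_top

end PositiveOperatorMeasure

section Covariance

variable {G : Type*} [Group G] [MeasurableSpace G] [MeasurableMul G] {H : Type*}
  [NormedAddCommGroup H] [InnerProductSpace ℂ H] [CompleteSpace H] {E : Set G → H →L[ℂ] H}
  {ν : H → H → ComplexMeasure G} {U : G → H →L[ℂ] H}

theorem tv_apply_eq_map_of_covariant (hEpos : ∀ B, MeasurableSet B → (E B).IsPositive)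
    (hν : ∀ ψ φ B, MeasurableSet B → ν ψ φ B = ⟪ψ, E B φ⟫)
    (hcov : ∀ g B, MeasurableSet B →
      (ContinuousLinearMap.adjoint (U g)).comp ((E B).comp (U g)) = E ((g * ·) ⁻¹' B))
    (g : G) (φ : H) : (ν (U g φ) (U g φ)).tv = (ν φ φ).tv.map (g * ·) := by
  ext B hB
  rw [Measure.map_apply (measurable_const_mul g) hB, tv_apply_eq_re_inner hEpos hν _ hB,
    tv_apply_eq_re_inner hEpos hν _ (hB.preimage (measurable_const_mul g)), ← hcov g B hB,
    ContinuousLinearMap.comp_apply, ContinuousLinearMap.comp_apply,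
    ContinuousLinearMap.adjoint_inner_right]

theorem apply_mem_integrabilityDomain_iff (hEpos : ∀ B, MeasurableSet B → (E B).IsPositive)
    (hν : ∀ ψ φ B, MeasurableSet B → ν ψ φ B = ⟪ψ, E B φ⟫)
    (hcov : ∀ g B, MeasurableSet B →
      (ContinuousLinearMap.adjoint (U g)).comp ((E B).comp (U g)) = E ((g * ·) ⁻¹' B))
    (F : G → ℝ) (g : G) (φ : H) :
    U g φ ∈ integrabilityDomain hEpos hν F ↔ Integrable (fun h => F (g * h)) (ν φ φ).tv := by
  change Integrable F _ ↔ _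
  rw [tv_apply_eq_map_of_covariant hEpos hν hcov]
  exact (MeasurableEquiv.mulLeft g).measurableEmbedding.integrable_map_iff

end Covariance

section Projective

variable {G : Type*} [Group G] {V : Type*} [NormedAddCommGroup V] [NormedSpace ℂ V]
  {U : G → V →L[ℂ] V} {c : G → G → ℂ}

/-- Since `U 1 ∘ U 1 = c 1 1 • U 1` and `U 1` is onto, `U 1` is the scalar `c 1 1`. -/
theorem apply_apply_inv_of_projective (hproj : ∀ g h, (U g).comp (U h) = c g h • U (g * h))
    (hsurj : Function.Surjective (U 1)) (g : G) (x : V) :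
    U g (U g⁻¹ x) = (c g g⁻¹ * c 1 1) • x := by
  have hU1 : ∀ y, U 1 y = c 1 1 • y := by
    intro y
    obtain ⟨z, rfl⟩ := hsurj y
    simpa using congrArg (fun T : V →L[ℂ] V => T z) (hproj 1 1)
  have h := congrArg (fun T : V →L[ℂ] V => T x) (hproj g g⁻¹)
  simp only [ContinuousLinearMap.comp_apply, smul_apply, mul_inv_cancel] at h
  rw [h, hU1, smul_smul]

theorem image_eq_of_projective (hproj : ∀ g h, (U g).comp (U h) = c g h • U (g * h))
    (hc : ∀ g h, c g h ≠ 0) (hsurj : Function.Surjective (U 1)) {K : Submodule ℂ V}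
    (hK : ∀ g, ∀ φ ∈ K, U g φ ∈ K) (g : G) : U g '' K = K := by
  refine (Set.image_subset_iff.2 fun φ => hK g φ).antisymm fun φ hφ => ?_
  have ha : c g g⁻¹ * c 1 1 ≠ 0 := mul_ne_zero (hc _ _) (hc _ _)
  refine ⟨U g⁻¹ ((c g g⁻¹ * c 1 1)⁻¹ • φ), hK _ _ (K.smul_mem _ hφ), ?_⟩
  rw [apply_apply_inv_of_projective hproj hsurj, smul_smul, mul_inv_cancel₀ ha, one_smul]

end Projective

theorem Submodule.eq_bot_or_dense_of_forall_apply_mem {G : Type*} [MeasurableSpace G]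
    {H : Type*} [NormedAddCommGroup H] [InnerProductSpace ℂ H] [CompleteSpace H]
    {μ : Measure G} {U : G → H →L[ℂ] H} {d : ℝ} (hd : d ≠ 0)
    (hsq : ∀ ψ φ : H, ‖ψ‖ = 1 → ‖φ‖ = 1 → ∫ g, ‖⟪ψ, U g φ⟫‖ ^ 2 ∂μ = d)
    {K : Submodule ℂ H} (hK : ∀ g, ∀ φ ∈ K, U g φ ∈ K) : K = ⊥ ∨ Dense (K : Set H) := by
  refine or_iff_not_imp_left.2 fun hK0 => ?_
  rw [Submodule.dense_iff_topologicalClosure_eq_top, Submodule.topologicalClosure_eq_top_iff,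
    Submodule.eq_bot_iff]
  intro ψ hψ
  by_contra hψ0
  obtain ⟨φ, hφK, hφ0⟩ := K.ne_bot_iff.1 hK0
  have horth : ∀ (a b : ℂ) g, ⟪a • ψ, U g (b • φ)⟫ = 0 := fun a b g =>
    (K.mem_orthogonal' _).1 (Kᗮ.smul_mem _ hψ) _ (hK g _ (K.smul_mem _ hφK))
  apply hd
  rw [← hsq _ _ (norm_smul_inv_norm (𝕜 := ℂ) hψ0) (norm_smul_inv_norm (𝕜 := ℂ) hφ0)]
  simp_rw [horth, norm_zero, zero_pow two_ne_zero, integral_zero]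

theorem stmt10_general {G : Type*} [Group G] [TopologicalSpace G] [IsTopologicalGroup G]
    [MeasurableSpace G] [BorelSpace G]
    (lam : Measure G)
    {H : Type*} [NormedAddCommGroup H] [InnerProductSpace ℂ H] [CompleteSpace H]
    (U : G → H →L[ℂ] H)
    (hUsurj : ∀ g : G, Function.Surjective (U g))
    (c : G → G → ℂ) (hc : ∀ g h : G, ‖c g h‖ = 1)
    (hproj : ∀ g h : G, (U g).comp (U h) = c g h • U (g * h))
    (d : ℝ) (hd : 0 < d)
    (hsq : ∀ ψ φ : H, ‖ψ‖ = 1 → ‖φ‖ = 1 → ∫ g, ‖⟪ψ, U g φ⟫‖ ^ 2 ∂lam = d)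
    (E : Set G → H →L[ℂ] H)
    (hEpos : ∀ B : Set G, MeasurableSet B → (E B).IsPositive)
    (ν : H → H → MeasureTheory.ComplexMeasure G)
    (hν : ∀ (ψ φ : H) (B : Set G), MeasurableSet B → ν ψ φ B = ⟪ψ, E B φ⟫)
    (hcov : ∀ (g : G) (B : Set G), MeasurableSet B →
      ((ContinuousLinearMap.adjoint (U g)).comp ((E B).comp (U g))) =
        E ((fun h => g * h) ⁻¹' B))
    (f : G → ℂ)
    (hdom : ∀ g : G,
      {φ : H | Integrable (fun h => ‖f h‖ ^ 2) (ν φ φ).tv} ⊆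
      {φ : H | Integrable (fun h => ‖f (g * h)‖ ^ 2) (ν φ φ).tv}) :
    (∀ g : G, (U g) '' {φ : H | Integrable (fun h => ‖f h‖ ^ 2) (ν φ φ).tv} =
        {φ : H | Integrable (fun h => ‖f h‖ ^ 2) (ν φ φ).tv}) ∧
    ({φ : H | Integrable (fun h => ‖f h‖ ^ 2) (ν φ φ).tv} = {0} ∨
      Dense {φ : H | Integrable (fun h => ‖f h‖ ^ 2) (ν φ φ).tv}) := by
  set D := integrabilityDomain hEpos hν fun h => ‖f h‖ ^ 2
  have hD : ∀ g, ∀ φ ∈ D, U g φ ∈ D := fun g φ hφ =>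
    (apply_mem_integrabilityDomain_iff hEpos hν hcov _ g φ).2 (hdom g hφ)
  have hc0 : ∀ g h, c g h ≠ 0 := fun g h => norm_ne_zero_iff.1 (by rw [hc]; exact one_ne_zero)
  refine ⟨image_eq_of_projective hproj hc0 (hUsurj 1) hD, ?_⟩
  exact (Submodule.eq_bot_or_dense_of_forall_apply_mem hd.ne' hsq hD).imp
    (congrArg SetLike.coe) id

/-- Let `G` be a connected, locally compact, second countable, unimodular
group with Haar measure `λ`, `U` a strongly continuous square integrable projective unitary
representation, and `E` a `U`-covariant observable. If `f : G → ℂ` is measurable and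
`D²(f,E) ⊆ D²(f(g·),E)` for all `g`, then `U(g)D²(f,E) = D²(f,E)` for all `g`, and `D²(f,E)`
is either `{0}` or dense in `H`. -/
theorem stmt10 {G : Type*} [Group G] [TopologicalSpace G] [IsTopologicalGroup G]
    [LocallyCompactSpace G] [SecondCountableTopology G] [ConnectedSpace G]
    [MeasurableSpace G] [BorelSpace G]
    (lam : Measure G) [lam.IsHaarMeasure] [lam.IsMulRightInvariant]
    {H : Type*} [NormedAddCommGroup H] [InnerProductSpace ℂ H] [CompleteSpace H]
    (U : G → H →L[ℂ] H)
    (hUiso : ∀ (g : G) (φ : H), ‖U g φ‖ = ‖φ‖)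
    (hUsurj : ∀ g : G, Function.Surjective (U g))
    (c : G → G → ℂ) (hc : ∀ g h : G, ‖c g h‖ = 1)
    (hproj : ∀ g h : G, (U g).comp (U h) = c g h • U (g * h))
    (hUcont : ∀ φ : H, Continuous fun g => U g φ)
    (d : ℝ) (hd : 0 < d)
    (hsq : ∀ ψ φ : H, ‖ψ‖ = 1 → ‖φ‖ = 1 → ∫ g, ‖⟪ψ, U g φ⟫‖ ^ 2 ∂lam = d)
    (E : Set G → H →L[ℂ] H)
    (hEpos : ∀ B : Set G, MeasurableSet B → (E B).IsPositive)
    (hEone : E Set.univ = 1)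
    (ν : H → H → MeasureTheory.ComplexMeasure G)
    (hν : ∀ (ψ φ : H) (B : Set G), MeasurableSet B → ν ψ φ B = ⟪ψ, E B φ⟫)
    (hcov : ∀ (g : G) (B : Set G), MeasurableSet B →
      ((ContinuousLinearMap.adjoint (U g)).comp ((E B).comp (U g))) =
        E ((fun h => g * h) ⁻¹' B))
    (f : G → ℂ) (hf : Measurable f)
    (hdom : ∀ g : G,
      {φ : H | Integrable (fun h => ‖f h‖ ^ 2) (ν φ φ).tv} ⊆
      {φ : H | Integrable (fun h => ‖f (g * h)‖ ^ 2) (ν φ φ).tv}) :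
    (∀ g : G, (U g) '' {φ : H | Integrable (fun h => ‖f h‖ ^ 2) (ν φ φ).tv} =
        {φ : H | Integrable (fun h => ‖f h‖ ^ 2) (ν φ φ).tv}) ∧
    ({φ : H | Integrable (fun h => ‖f h‖ ^ 2) (ν φ φ).tv} = {0} ∨
      Dense {φ : H | Integrable (fun h => ‖f h‖ ^ 2) (ν φ φ).tv}) :=
  stmt10_general lam U hUsurj c hc hproj d hd hsq E hEpos ν hν hcov f hdom
end
end
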